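/- arXiv:2502.07975 — 8 statements merged into one kernel-verified Lean document; each statement's English description precedes it below -/
import Mathlib

section
/- Let F : ℝ³ → ℝ³ be the vector field with components F_i(x) = x_i(1 − x_i)(1 − 2x_j)(1 − 2x_k) for {i,j,k} = {1,2,3}, and let φ : ℝ × [0,1]³ → [0,1]³ be a flow of F (φ(0,x) = x, φ(s+t,x) = φ(s,φ(t,x)), and t ↦ φ(t,x) is differentiable with derivative F(φ(t,x))). Then every attracting set of φ that contains the point (0,0,0) also contains the points (1/2,1/2,1/2) and (1,1,1). -/
/-!
Each plane `x i = x j` is forward invariant: the difference `w = x i - x j` satisfies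
`w' = w · g` with `|g| ≤ 1` on the cube, so Grönwall keeps `w = 0`. On the diagonal the flow
is therefore governed by `u' = u (1 - u) (1 - 2u)²`, whose solutions increase and cannot reach
the equilibria `1/2` and `1` in finite time. Hence `(c, c, c)` tends to `(1/2, 1/2, 1/2)` for
`0 < c < 1/2` and to `(1, 1, 1)` for `1/2 < c < 1`. Such points lie arbitrarily close to
`(0, 0, 0)`, resp. `(1/2, 1/2, 1/2)`, hence in the basin of `A`, and their ω-limits lie in `A`.
-/

open Filter

/-- The cube `[0,1]³`. -/
def cube : Set (Fin 3 → ℝ) := Set.Icc 0 1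

/-- The ω-limit set of `z` under the flow `φ`. -/
def omegaLimit3 (φ : ℝ → (Fin 3 → ℝ) → (Fin 3 → ℝ)) (z : Fin 3 → ℝ) : Set (Fin 3 → ℝ) :=
  {y | ∃ t : ℕ → ℝ, Tendsto t atTop atTop ∧ Tendsto (fun n => φ (t n) z) atTop (nhds y)}

/-- `A` is an attracting set of the flow `φ` on `[0,1]³`: compact, invariant, and
possessing a strictly larger forward-invariant open neighborhood (open in `[0,1]³`)
all of whose points have ω-limit sets inside `A`. -/
def AttractingSet3 (φ : ℝ → (Fin 3 → ℝ) → (Fin 3 → ℝ)) (A : Set (Fin 3 → ℝ)) : Prop :=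
  A ⊆ cube ∧ IsCompact A ∧ (∀ t : ℝ, φ t '' A = A) ∧
  ∃ V : Set (Fin 3 → ℝ), IsOpen V ∧ A ⊆ V ∩ cube ∧ V ∩ cube ≠ A ∧
    (∀ t ≥ (0 : ℝ), ∀ z ∈ V ∩ cube, φ t z ∈ V ∩ cube) ∧
    ∀ z ∈ V ∩ cube, omegaLimit3 φ z ⊆ A

open Set Topology

section AutonomousODE

variable {f u : ℝ → ℝ} {s : Set ℝ} {β K : ℝ}

theorem ne_of_hasDerivAt_of_abs_le_mul (hd : ∀ t ≥ 0, HasDerivAt u (f (u t)) t)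
    (hu : ∀ t ≥ 0, u t ∈ s) (hf : ∀ x ∈ s, |f x| ≤ K * |x - β|) (h0 : u 0 ≠ β)
    {T : ℝ} (hT : 0 ≤ T) : u T ≠ β := by
  intro hTβ
  -- run time backwards from `T`, where `u` sits at the zero `β` of `f`
  have hback : ∀ t ∈ Icc 0 T, HasDerivAt (fun t => u (T - t) - β) (-f (u (T - t))) t := by
    intro t ht
    simpa using ((hd (T - t) (by linarith [ht.2])).comp t
      ((hasDerivAt_id t).const_sub T)).sub_const β
  have := eq_zero_of_abs_deriv_le_mul_abs_self_of_eq_zero_right (K := K)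
    (fun t ht => (hback t ht).continuousAt.continuousWithinAt)
    (fun t ht => (hback t (Ico_subset_Icc_self ht)).hasDerivWithinAt)
    (by simp [hTβ])
    (fun t ht => by simpa using hf _ (hu _ (by linarith [ht.2]))) T (right_mem_Icc.2 hT)
  exact h0 (by simpa [sub_eq_zero] using this)

theorem lt_of_hasDerivAt_of_abs_le_mul (hd : ∀ t ≥ 0, HasDerivAt u (f (u t)) t)
    (hu : ∀ t ≥ 0, u t ∈ s) (hf : ∀ x ∈ s, |f x| ≤ K * |x - β|) (h0 : u 0 < β)
    {T : ℝ} (hT : 0 ≤ T) : u T < β := by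
  by_contra! hβT
  obtain ⟨t, ht, htβ⟩ := intermediate_value_Icc hT
    (fun t ht => (hd t ht.1).continuousAt.continuousWithinAt) ⟨h0.le, hβT⟩
  exact ne_of_hasDerivAt_of_abs_le_mul hd hu hf h0.ne ht.1 htβ

theorem tendsto_natCast_of_hasDerivAt_of_pos (hd : ∀ t ≥ 0, HasDerivAt u (f (u t)) t)
    (hf₀ : ∀ t ≥ 0, 0 ≤ f (u t)) (hlt : ∀ t ≥ 0, u t < β)
    (hfc : ContinuousOn f (Ico (u 0) β)) (hfpos : ∀ x ∈ Ico (u 0) β, 0 < f x) :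
    Tendsto (fun n : ℕ => u n) atTop (𝓝 β) := by
  have hmono : MonotoneOn u (Ici 0) := by
    refine monotoneOn_of_hasDerivWithinAt_nonneg (convex_Ici 0)
      (fun t ht => (hd t ht).continuousAt.continuousWithinAt) (fun t ht => ?_)
      (fun t ht => hf₀ t (interior_subset ht))
    exact (hd t (interior_subset ht)).hasDerivWithinAt
  have hbdd : BddAbove (range fun n : ℕ => u n) :=
    ⟨β, forall_mem_range.2 fun n => (hlt n n.cast_nonneg).le⟩
  set L := ⨆ n : ℕ, u n
  have hlim : Tendsto (fun n : ℕ => u n) atTop (𝓝 L) :=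
    tendsto_atTop_ciSup (fun m n h => hmono (mem_Ici.2 m.cast_nonneg) (mem_Ici.2 n.cast_nonneg)
      (by exact_mod_cast h)) hbdd
  have hmem : ∀ t ≥ 0, u t ∈ Icc (u 0) L := fun t ht =>
    ⟨hmono self_mem_Ici ht ht, (hmono ht (mem_Ici.2 (Nat.cast_nonneg _)) (Nat.le_ceil t)).trans
      (le_ciSup hbdd ⌈t⌉₊)⟩
  obtain hLβ | rfl := (ciSup_le fun n => (hlt n n.cast_nonneg).le : L ≤ β).lt_or_eq
  · exfalso
    have hsub : Icc (u 0) L ⊆ Ico (u 0) β := Icc_subset_Ico_right hLβ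
    obtain ⟨x₀, hx₀, hmin⟩ := isCompact_Icc.exists_isMinOn
      (nonempty_Icc.2 (hmem 0 le_rfl).2) (hfc.mono hsub)
    -- the solution gains at least `f x₀ > 0` per unit of time, yet stays below `L`
    have hgrowth : ∀ n : ℕ, f x₀ * n ≤ L - u 0 := by
      intro n
      have := (convex_Ici (0 : ℝ)).mul_sub_le_image_sub_of_le_deriv
        (fun t ht => (hd t ht).continuousAt.continuousWithinAt)
        (fun t ht => (hd t (interior_subset ht)).differentiableAt.differentiableWithinAt)
        (fun t ht => by
          rw [(hd t (interior_subset ht)).deriv]; exact hmin (hmem t (interior_subset ht)))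
        0 self_mem_Ici n (mem_Ici.2 n.cast_nonneg) n.cast_nonneg
      linarith [(hmem n n.cast_nonneg).2]
    obtain ⟨n, hn⟩ := exists_nat_gt ((L - u 0) / f x₀)
    have hpos := hfpos x₀ (hsub hx₀)
    linarith [hgrowth n, (div_lt_iff₀ hpos).1 hn]
  · exact hlim

end AutonomousODE

def diagField (x : ℝ) : ℝ := x * (1 - x) * (1 - 2 * x) ^ 2

theorem diagField_nonneg {x : ℝ} (hx : x ∈ Icc (0 : ℝ) 1) : 0 ≤ diagField x :=
  mul_nonneg (mul_nonneg hx.1 (sub_nonneg.2 hx.2)) (sq_nonneg _)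

theorem diagField_pos {x : ℝ} (h0 : 0 < x) (h1 : x < 1) (hx : x ≠ 1 / 2) : 0 < diagField x := by
  have : 1 - 2 * x ≠ 0 := fun h => hx (by linarith)
  exact mul_pos (mul_pos h0 (sub_pos.2 h1)) (sq_pos_of_ne_zero this)

theorem abs_diagField_le_abs_sub_half {x : ℝ} (hx : x ∈ Icc (0 : ℝ) 1) :
    |diagField x| ≤ |x - 1 / 2| := by
  rw [abs_of_nonneg (diagField_nonneg hx), diagField]
  rcases le_total x (1 / 2) with h | h
  · rw [abs_of_nonpos (by linarith)]
    nlinarith [mul_nonneg hx.1 (by linarith : (0 : ℝ) ≤ 1 - 2 * x)]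
  · rw [abs_of_nonneg (by linarith)]
    nlinarith [mul_nonneg (sub_nonneg.2 h) (sub_nonneg.2 hx.2)]

theorem abs_diagField_le_abs_sub_one {x : ℝ} (hx : x ∈ Icc (0 : ℝ) 1) :
    |diagField x| ≤ |x - 1| := by
  rw [abs_of_nonneg (diagField_nonneg hx), abs_of_nonpos (by linarith [hx.2]), diagField]
  have hsq : (1 - 2 * x) ^ 2 ≤ 1 := by nlinarith [hx.1, hx.2]
  have : x * (1 - 2 * x) ^ 2 ≤ 1 := mul_le_one₀ hx.2 (sq_nonneg _) hsq
  nlinarith [mul_nonneg (sub_nonneg.2 hx.2) (sub_nonneg.2 this)]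

def IsOddSumReplicatorField (F : (Fin 3 → ℝ) → (Fin 3 → ℝ)) : Prop :=
  ∀ (x : Fin 3 → ℝ) (i j k : Fin 3), i ≠ j → i ≠ k → j ≠ k →
    F x i = x i * (1 - x i) * (1 - 2 * x j) * (1 - 2 * x k)

structure IsCubeFlow (F : (Fin 3 → ℝ) → (Fin 3 → ℝ)) (φ : ℝ → (Fin 3 → ℝ) → (Fin 3 → ℝ)) :
    Prop where
  mapsTo : ∀ x ∈ cube, ∀ t : ℝ, φ t x ∈ cube
  zero : ∀ x, φ 0 x = x
  hasDerivAt : ∀ x ∈ cube, ∀ (t : ℝ) (i : Fin 3), HasDerivAt (fun τ => φ τ x i) (F (φ t x) i) t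

theorem const_mem_cube {c : ℝ} (hc : c ∈ Icc (0 : ℝ) 1) : (fun _ => c) ∈ cube :=
  ⟨fun _ => hc.1, fun _ => hc.2⟩

theorem IsOddSumReplicatorField.abs_sub_le {F : (Fin 3 → ℝ) → (Fin 3 → ℝ)}
    (hF : IsOddSumReplicatorField F) {x : Fin 3 → ℝ} (hx : x ∈ cube) {i j k : Fin 3}
    (hij : i ≠ j) (hik : i ≠ k) (hjk : j ≠ k) : |F x i - F x j| ≤ |x i - x j| := by
  obtain ⟨⟨hxi, hxi'⟩, ⟨hxj, hxj'⟩, ⟨hxk, hxk'⟩⟩ : (0 ≤ x i ∧ x i ≤ 1) ∧ (0 ≤ x j ∧ x j ≤ 1) ∧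
      (0 ≤ x k ∧ x k ≤ 1) := ⟨⟨hx.1 i, hx.2 i⟩, ⟨hx.1 j, hx.2 j⟩, ⟨hx.1 k, hx.2 k⟩⟩
  have hsub : F x i - F x j =
      (x i - x j) * ((1 - 2 * x k) * ((1 - x i) * (1 - x j) + x i * x j)) := by
    rw [hF x i j k hij hik hjk, hF x j i k hij.symm hjk hik]; ring
  rw [hsub, abs_mul, abs_mul]
  refine mul_le_of_le_one_right (abs_nonneg _) (mul_le_one₀ ?_ (abs_nonneg _) ?_)
  · exact abs_le.2 ⟨by linarith, by linarith⟩
  · exact abs_le.2 ⟨by nlinarith [mul_nonneg hxi hxj], by nlinarith [mul_nonneg hxi hxj]⟩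

namespace IsCubeFlow

variable {F : (Fin 3 → ℝ) → (Fin 3 → ℝ)} {φ : ℝ → (Fin 3 → ℝ) → (Fin 3 → ℝ)}

theorem apply_eq_of_apply_eq (hφ : IsCubeFlow F φ) (hF : IsOddSumReplicatorField F)
    {z : Fin 3 → ℝ} (hz : z ∈ cube) {i j k : Fin 3} (hij : i ≠ j) (hik : i ≠ k) (hjk : j ≠ k)
    (hzij : z i = z j) {T : ℝ} (hT : 0 ≤ T) : φ T z i = φ T z j := by
  have hd : ∀ t, HasDerivAt (fun t => φ t z i - φ t z j) (F (φ t z) i - F (φ t z) j) t :=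
    fun t => (hφ.hasDerivAt z hz t i).sub (hφ.hasDerivAt z hz t j)
  have := eq_zero_of_abs_deriv_le_mul_abs_self_of_eq_zero_right (K := 1)
    (fun t _ => (hd t).continuousAt.continuousWithinAt) (fun t _ => (hd t).hasDerivWithinAt)
    (by simp [hφ.zero, hzij])
    (fun t _ => by simpa using hF.abs_sub_le (hφ.mapsTo z hz t) hij hik hjk) T ⟨hT, le_rfl⟩
  exact sub_eq_zero.1 this

theorem tendsto_const (hφ : IsCubeFlow F φ) (hF : IsOddSumReplicatorField F) {c β : ℝ}
    (hc : c ∈ Icc (0 : ℝ) 1) (hcβ : c < β) (hβ : ∀ x ∈ Icc (0 : ℝ) 1, |diagField x| ≤ |x - β|)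
    (hpos : ∀ x ∈ Ico c β, 0 < diagField x) :
    Tendsto (fun n : ℕ => φ n (fun _ => c)) atTop (𝓝 fun _ => β) := by
  have hz := const_mem_cube hc
  set u := fun t => φ t (fun _ => c) 0
  have hdiag : ∀ t ≥ 0, ∀ i, φ t (fun _ => c) i = u t := by
    intro t ht i
    fin_cases i
    · rfl
    · exact hφ.apply_eq_of_apply_eq hF hz (k := 2) (by decide) (by decide) (by decide) rfl ht
    · exact hφ.apply_eq_of_apply_eq hF hz (k := 1) (by decide) (by decide) (by decide) rfl ht
  have hu : ∀ t ≥ 0, u t ∈ Icc 0 1 := fun t _ => ⟨(hφ.mapsTo _ hz t).1 0, (hφ.mapsTo _ hz t).2 0⟩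
  have hd : ∀ t ≥ 0, HasDerivAt u (diagField (u t)) t := by
    intro t ht
    convert hφ.hasDerivAt _ hz t 0 using 1
    rw [hF _ 0 1 2 (by decide) (by decide) (by decide), hdiag t ht 1, hdiag t ht 2, diagField]
    ring
  have hu0 : u 0 = c := by simp [u, hφ.zero]
  have hlt : ∀ t ≥ 0, u t < β := fun t ht =>
    lt_of_hasDerivAt_of_abs_le_mul (K := 1) hd hu (by simpa using hβ) (hu0 ▸ hcβ) ht
  have hlim := tendsto_natCast_of_hasDerivAt_of_pos hd (fun t ht => diagField_nonneg (hu t ht))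
    hlt (by unfold diagField; fun_prop) (hu0 ▸ hpos)
  exact tendsto_pi_nhds.2 fun i => hlim.congr fun n => (hdiag n n.cast_nonneg i).symm

end IsCubeFlow

theorem AttractingSet3.mem_of_frequently {φ : ℝ → (Fin 3 → ℝ) → (Fin 3 → ℝ)}
    {A : Set (Fin 3 → ℝ)} (hA : AttractingSet3 φ A) {x y : Fin 3 → ℝ} (hx : x ∈ A)
    (h : ∃ᶠ z in 𝓝 x, z ∈ cube ∧ y ∈ omegaLimit3 φ z) : y ∈ A := by
  obtain ⟨-, -, -, V, hV, hAV, -, -, hω⟩ := hA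
  obtain ⟨z, ⟨hz, hy⟩, hzV⟩ := (h.and_eventually (hV.mem_nhds (hAV hx).1)).exists
  exact hω z ⟨hzV, hz⟩ hy

theorem AttractingSet3.const_mem_of_const_mem {F : (Fin 3 → ℝ) → (Fin 3 → ℝ)}
    {φ : ℝ → (Fin 3 → ℝ) → (Fin 3 → ℝ)} {A : Set (Fin 3 → ℝ)} (hA : AttractingSet3 φ A)
    (hφ : IsCubeFlow F φ) (hF : IsOddSumReplicatorField F) {a β : ℝ} (ha : (fun _ => a) ∈ A)
    (ha₀ : 0 ≤ a) (haβ : a < β) (hβ₁ : β ≤ 1)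
    (hβ : ∀ x ∈ Icc (0 : ℝ) 1, |diagField x| ≤ |x - β|)
    (hpos : ∀ x ∈ Ioo a β, 0 < diagField x) : (fun _ => β) ∈ A := by
  refine hA.mem_of_frequently ha ?_
  have hconst : Tendsto (fun c : ℝ => fun _ : Fin 3 => c) (𝓝[>] a) (𝓝 fun _ => a) :=
    tendsto_pi_nhds.2 fun _ => tendsto_nhdsWithin_of_tendsto_nhds tendsto_id
  refine hconst.frequently (Eventually.frequently ?_)
  filter_upwards [Ioo_mem_nhdsGT haβ] with c hc
  have hc01 : c ∈ Icc (0 : ℝ) 1 := ⟨ha₀.trans hc.1.le, hc.2.le.trans hβ₁⟩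
  exact ⟨const_mem_cube hc01, Nat.cast, tendsto_natCast_atTop_atTop,
    hφ.tendsto_const hF hc01 hc.2 hβ fun x hx => hpos x ⟨hc.1.trans_le hx.1, hx.2⟩⟩

theorem statement5_general (F : (Fin 3 → ℝ) → (Fin 3 → ℝ))
    (hF : ∀ (x : Fin 3 → ℝ) (i j k : Fin 3), i ≠ j → i ≠ k → j ≠ k →
      F x i = x i * (1 - x i) * (1 - 2 * x j) * (1 - 2 * x k))
    (φ : ℝ → (Fin 3 → ℝ) → (Fin 3 → ℝ))
    (hcube : ∀ x ∈ cube, ∀ t : ℝ, φ t x ∈ cube)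
    (h0 : ∀ x, φ 0 x = x)
    (hderiv : ∀ x ∈ cube, ∀ (t : ℝ) (i : Fin 3),
      HasDerivAt (fun τ => φ τ x i) (F (φ t x) i) t)
    (A : Set (Fin 3 → ℝ)) (hA : AttractingSet3 φ A)
    (h000 : (fun _ => (0 : ℝ)) ∈ A) :
    (fun _ => (1 / 2 : ℝ)) ∈ A ∧ (fun _ => (1 : ℝ)) ∈ A := by
  have hφ : IsCubeFlow F φ := ⟨hcube, h0, hderiv⟩
  have hhalf : (fun _ => (1 / 2 : ℝ)) ∈ A :=
    hA.const_mem_of_const_mem hφ hF h000 le_rfl (by norm_num) (by norm_num)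
      (fun _ => abs_diagField_le_abs_sub_half)
      (fun x hx => diagField_pos hx.1 (by linarith [hx.2]) hx.2.ne)
  exact ⟨hhalf, hA.const_mem_of_const_mem hφ hF hhalf (by norm_num) (by norm_num) le_rfl
    (fun _ => abs_diagField_le_abs_sub_one)
    (fun x hx => diagField_pos (by linarith [hx.1]) hx.2 hx.1.ne')⟩

/-- For (any flow of) the replicator field of the odd-sum 2×2×2 game,
every attracting set containing `(0,0,0)` also contains `(1/2,1/2,1/2)` and `(1,1,1)`. -/
theorem statement5 (F : (Fin 3 → ℝ) → (Fin 3 → ℝ))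
    (hF : ∀ (x : Fin 3 → ℝ) (i j k : Fin 3), i ≠ j → i ≠ k → j ≠ k →
      F x i = x i * (1 - x i) * (1 - 2 * x j) * (1 - 2 * x k))
    (φ : ℝ → (Fin 3 → ℝ) → (Fin 3 → ℝ))
    (hcube : ∀ x ∈ cube, ∀ t : ℝ, φ t x ∈ cube)
    (h0 : ∀ x, φ 0 x = x)
    (hgrp : ∀ s t : ℝ, ∀ x, φ (s + t) x = φ s (φ t x))
    (hderiv : ∀ x ∈ cube, ∀ (t : ℝ) (i : Fin 3),
      HasDerivAt (fun τ => φ τ x i) (F (φ t x) i) t)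
    (A : Set (Fin 3 → ℝ)) (hA : AttractingSet3 φ A)
    (h000 : (fun _ => (0 : ℝ)) ∈ A) :
    (fun _ => (1 / 2 : ℝ)) ∈ A ∧ (fun _ => (1 : ℝ)) ∈ A :=
  statement5_general F hF φ hcube h0 hderiv A hA h000
end

section
/- Let u be a generic two-player zero-sum game (u₁(p) + u₂(p) = 0 for every pure profile p), let H be a sink equilibrium, and let α ≠ γ ∈ S₁ and β ≠ δ ∈ S₂ be such that (α,β), (γ,β), (α,δ) ∈ H and (γ,δ) ∉ H (so the 2×2 subgame {α,γ} × {β,δ} is a cavity of H). Then (u₁(γ,β) − u₁(α,β)) + (u₂(α,δ) − u₂(α,β)) < 0; that is, every cavity of every sink equilibrium of a generic two-player zero-sum game is pseudoconvex. -/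
open Finset Filter

variable {S₁ S₂ : Type*}

/-- `p` and `q` are 1-comparable: same column, different rows. -/
def Comp1 (p q : S₁ × S₂) : Prop := p.2 = q.2 ∧ p.1 ≠ q.1

/-- `p` and `q` are 2-comparable: same row, different columns. -/
def Comp2 (p q : S₁ × S₂) : Prop := p.1 = q.1 ∧ p.2 ≠ q.2

/-- Arc of the preference graph of the two-player game `(u₁, u₂)`. -/
def PrefArc2 (u₁ u₂ : S₁ × S₂ → ℝ) (p q : S₁ × S₂) : Prop :=
  (Comp1 p q ∧ u₁ p < u₁ q) ∨ (Comp2 p q ∧ u₂ p < u₂ q)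

/-- The two-player game `(u₁, u₂)` is generic. -/
def Generic2 (u₁ u₂ : S₁ × S₂ → ℝ) : Prop :=
  (∀ p q, Comp1 p q → u₁ p ≠ u₁ q) ∧ (∀ p q, Comp2 p q → u₂ p ≠ u₂ q)

/-- `H` is a sink strongly connected component of the preference graph. -/
def SinkEq2 (u₁ u₂ : S₁ × S₂ → ℝ) (H : Set (S₁ × S₂)) : Prop :=
  H.Nonempty ∧
  (∀ p ∈ H, ∀ q ∈ H,
    Relation.ReflTransGen (fun a b => a ∈ H ∧ b ∈ H ∧ PrefArc2 u₁ u₂ a b) p q) ∧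
  (∀ p ∈ H, ∀ q, PrefArc2 u₁ u₂ p q → q ∈ H)

/-- The product matrix of a two-player game: `M q p = (u₁(q₁,p₂) − u₁ p) + (u₂(p₁,q₂) − u₂ p)`. -/
def prodMat2 (u₁ u₂ : S₁ × S₂ → ℝ) (q p : S₁ × S₂) : ℝ :=
  (u₁ (q.1, p.2) - u₁ p) + (u₂ (p.1, q.2) - u₂ p)

/-- Every cavity of `H` is pseudoconvex. -/
def Pseudoconvex2 (u₁ u₂ : S₁ × S₂ → ℝ) (H : Set (S₁ × S₂)) : Prop :=
  ∀ (α γ : S₁) (β δ : S₂), α ≠ γ → β ≠ δ →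
    (α, β) ∈ H → (γ, β) ∈ H → (α, δ) ∈ H → (γ, δ) ∉ H →
    (u₁ (γ, β) - u₁ (α, β)) + (u₂ (α, δ) - u₂ (α, β)) < 0

/-- Every cavity of every sink equilibrium of a generic two-player
zero-sum game is pseudoconvex. -/
theorem statement7 (u₁ u₂ : S₁ × S₂ → ℝ)
    (hzs : ∀ p, u₁ p + u₂ p = 0) (hgen : Generic2 u₁ u₂)
    (H : Set (S₁ × S₂)) (hH : SinkEq2 u₁ u₂ H)
    (α γ : S₁) (β δ : S₂) (hαγ : α ≠ γ) (hβδ : β ≠ δ)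
    (h1 : (α, β) ∈ H) (h2 : (γ, β) ∈ H) (h3 : (α, δ) ∈ H) (h4 : (γ, δ) ∉ H) :
    (u₁ (γ, β) - u₁ (α, β)) + (u₂ (α, δ) - u₂ (α, β)) < 0 := by
  obtain ⟨-, -, hsink⟩ := hH
  -- no arc from (γ,β) to (γ,δ)
  have hc2 : Comp2 ((γ, β) : S₁ × S₂) (γ, δ) := ⟨rfl, hβδ⟩
  have hc1 : Comp1 ((α, δ) : S₁ × S₂) (γ, δ) := ⟨rfl, hαγ⟩
  have hA : ¬ u₂ (γ, β) < u₂ (γ, δ) := fun h =>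
    h4 (hsink _ h2 _ (Or.inr ⟨hc2, h⟩))
  have hB : ¬ u₁ (α, δ) < u₁ (γ, δ) := fun h =>
    h4 (hsink _ h3 _ (Or.inl ⟨hc1, h⟩))
  have hA' : u₂ (γ, δ) < u₂ (γ, β) :=
    lt_of_le_of_ne (not_lt.mp hA) (fun h => hgen.2 _ _ hc2 h.symm)
  have hB' : u₁ (γ, δ) < u₁ (α, δ) :=
    lt_of_le_of_ne (not_lt.mp hB) (fun h => hgen.1 _ _ hc1 h.symm)
  have e1 := hzs (γ, β)
  have e2 := hzs (γ, δ)
  have e3 := hzs (α, δ)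
  have e4 := hzs (α, β)
  linarith
end

section
/- Let u be a finite N-player game with product matrix M, and let x : ℝ → X be differentiable and satisfy the replicator equation: for every player i, strategy s ∈ S_i, and time t, (x^i_s)′(t) = x^i_s(t)(𝕌_i(s; x(t)_{-i}) − 𝕌_i(x(t))). Define z_p(t) = ∏_i x^i_{p_i}(t) for each pure profile p. Then for every pure profile p and every t, z_p′(t) = z_p(t) · Σ_{q∈Z} M_{p,q} z_q(t). -/
open Finset Filter

variable {N : ℕ}

/-- A point of the ambient space `∏ i, ℝ^{S i}` is a mixed profile if each
coordinate is a probability vector. -/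
def IsMixed {S : Fin N → Type*} [∀ i, Fintype (S i)] (x : ∀ i, S i → ℝ) : Prop :=
  (∀ i s, 0 ≤ x i s) ∧ ∀ i, ∑ s, x i s = 1

/-- Mass that the product distribution of `x` puts on the pure profile `p`. -/
noncomputable def zmass {S : Fin N → Type*} [∀ i, Fintype (S i)]
    (x : ∀ i, S i → ℝ) (p : ∀ i, S i) : ℝ :=
  ∏ i, x i (p i)

/-- Expected utility of player `i` at mixed profile `x`. -/
noncomputable def expU {S : Fin N → Type*} [∀ i, Fintype (S i)] [∀ i, DecidableEq (S i)]
    (u : (∀ i, S i) → Fin N → ℝ) (x : ∀ i, S i → ℝ) (i : Fin N) : ℝ :=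
  ∑ p : ∀ i, S i, zmass x p * u p i

/-- Expected utility of pure strategy `s` for player `i` against `x₋ᵢ`. -/
noncomputable def expUpure {S : Fin N → Type*} [∀ i, Fintype (S i)] [∀ i, DecidableEq (S i)]
    (u : (∀ i, S i) → Fin N → ℝ) (x : ∀ i, S i → ℝ) (i : Fin N) (s : S i) : ℝ :=
  ∑ p : ∀ i, S i, zmass x p * u (Function.update p i s) i

/-- The replicator vector field (defined by its polynomial formula on the ambient space). -/
noncomputable def repl {S : Fin N → Type*} [∀ i, Fintype (S i)] [∀ i, DecidableEq (S i)]
    (u : (∀ i, S i) → Fin N → ℝ) (x : ∀ i, S i → ℝ) (i : Fin N) (s : S i) : ℝ :=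
  x i s * (expUpure u x i s - expU u x i)

/-- `p` and `q` are `i`-comparable: distinct and differing only in player `i`'s strategy. -/
def IComparable {S : Fin N → Type*} (i : Fin N) (p q : ∀ i, S i) : Prop :=
  p ≠ q ∧ ∀ j, j ≠ i → p j = q j

/-- Arc of the preference graph. -/
def PrefArc {S : Fin N → Type*} (u : (∀ i, S i) → Fin N → ℝ) (p q : ∀ i, S i) : Prop :=
  ∃ i, IComparable i p q ∧ u p i < u q i

/-- The game is generic: comparable profiles give the moving player distinct payoffs. -/
def Generic {S : Fin N → Type*} (u : (∀ i, S i) → Fin N → ℝ) : Prop :=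
  ∀ i p q, IComparable i p q → u p i ≠ u q i

/-- `H` is a sink strongly connected component of the preference graph. -/
def SinkEquilibrium {S : Fin N → Type*} (u : (∀ i, S i) → Fin N → ℝ)
    (H : Set (∀ i, S i)) : Prop :=
  H.Nonempty ∧
  (∀ p ∈ H, ∀ q ∈ H,
    Relation.ReflTransGen (fun a b => a ∈ H ∧ b ∈ H ∧ PrefArc u a b) p q) ∧
  (∀ p ∈ H, ∀ q, PrefArc u p q → q ∈ H)

/-- The content of a set of pure profiles. -/
def content {S : Fin N → Type*} [∀ i, Fintype (S i)] (H : Set (∀ i, S i)) :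
    Set (∀ i, S i → ℝ) :=
  {x | IsMixed x ∧ ∀ p, 0 < zmass x p → p ∈ H}

/-- A replicator flow on the strategy space. -/
def IsReplicatorFlow {S : Fin N → Type*} [∀ i, Fintype (S i)] [∀ i, DecidableEq (S i)]
    (u : (∀ i, S i) → Fin N → ℝ)
    (φ : ℝ → (∀ i, S i → ℝ) → (∀ i, S i → ℝ)) : Prop :=
  (∀ x, IsMixed x → ∀ t, IsMixed (φ t x)) ∧
  (∀ x, φ 0 x = x) ∧
  (∀ s t x, φ (s + t) x = φ s (φ t x)) ∧
  (∀ x, IsMixed x → ∀ t (i : Fin N) (s : S i),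
    HasDerivAt (fun τ => φ τ x i s) (repl u (φ t x) i s) t)

/-- Nash equilibrium of the game `u` restricted to the subgame `T`. -/
def NashOn {S : Fin N → Type*} [∀ i, Fintype (S i)] [∀ i, DecidableEq (S i)]
    (u : (∀ i, S i) → Fin N → ℝ) (T : ∀ i, Finset (S i)) (x : ∀ i, S i → ℝ) : Prop :=
  IsMixed x ∧ (∀ i s, x i s ≠ 0 → s ∈ T i) ∧
  ∀ i, ∀ s ∈ T i, expUpure u x i s ≤ expU u x i

/-- Quasi-strict Nash equilibrium of the game `u` restricted to the subgame `T`. -/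
def QuasiStrictNashOn {S : Fin N → Type*} [∀ i, Fintype (S i)] [∀ i, DecidableEq (S i)]
    (u : (∀ i, S i) → Fin N → ℝ) (T : ∀ i, Finset (S i)) (x : ∀ i, S i → ℝ) : Prop :=
  NashOn u T x ∧ ∀ i, ∀ s ∈ T i, x i s = 0 → expUpure u x i s < expU u x i

/-- `x` is a local source of the sink equilibrium `H` in the subgame `T`. -/
def LocalSource {S : Fin N → Type*} [∀ i, Fintype (S i)] [∀ i, DecidableEq (S i)]
    (u : (∀ i, S i) → Fin N → ℝ) (H : Set (∀ i, S i)) (T : ∀ i, Finset (S i))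
    (x : ∀ i, S i → ℝ) : Prop :=
  (∀ i, (T i).Nonempty) ∧
  x ∈ content H ∧
  (∀ i s, x i s ≠ 0 → s ∈ T i) ∧
  (∃ p : ∀ i, S i, (∀ i, p i ∈ T i) ∧ p ∉ H) ∧
  QuasiStrictNashOn (fun p i => -(u p i)) T x

/-- The product matrix of the game: `M q p = Σ_i (u_i(q_i; p₋ᵢ) − u_i(p))`. -/
noncomputable def prodMat {S : Fin N → Type*} [∀ i, Fintype (S i)] [∀ i, DecidableEq (S i)]
    (u : (∀ i, S i) → Fin N → ℝ) (q p : ∀ i, S i) : ℝ :=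
  ∑ i, (u (Function.update p i (q i)) i - u p i)

/-!
The logarithmic derivative of a product is the sum of the logarithmic derivatives of its
factors, so along the replicator flow `z_p'/z_p = Σ_i (𝕌_i(p_i; x₋ᵢ) − 𝕌_i(x))`. Writing
both expected utilities as `z`-weighted sums over pure profiles `q` and exchanging the sums
over `i` and `q` turns this into `Σ_q M_{p,q} z_q`.
-/

theorem HasDerivAt.finsetProd_of_hasDerivAt_mul {ι 𝕜 𝔸 : Type*} [NontriviallyNormedField 𝕜]
    [NormedCommRing 𝔸] [NormedAlgebra 𝕜 𝔸] {s : Finset ι} {f : ι → 𝕜 → 𝔸} {g : ι → 𝔸}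
    {t : 𝕜} (hf : ∀ i ∈ s, HasDerivAt (f i) (f i t * g i) t) :
    HasDerivAt (fun τ => ∏ i ∈ s, f i τ) ((∏ i ∈ s, f i t) * ∑ i ∈ s, g i) t := by
  classical
  convert HasDerivAt.fun_finsetProd hf using 1
  rw [Finset.mul_sum]
  refine Finset.sum_congr rfl fun i hi => ?_
  rw [smul_eq_mul, ← mul_assoc, ← Finset.mul_prod_erase s (f · t) hi]
  ring

theorem sum_prodMat_mul_zmass {S : Fin N → Type*} [∀ i, Fintype (S i)]
    [∀ i, DecidableEq (S i)] (u : (∀ i, S i) → Fin N → ℝ) (x : ∀ i, S i → ℝ)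
    (p : ∀ i, S i) :
    ∑ q : ∀ i, S i, prodMat u p q * zmass x q =
      ∑ i, (expUpure u x i (p i) - expU u x i) := by
  simp only [prodMat, expUpure, expU, Finset.sum_mul, ← Finset.sum_sub_distrib]
  rw [Finset.sum_comm]
  refine Finset.sum_congr rfl fun i _ => Finset.sum_congr rfl fun q _ => ?_
  ring

theorem statement8_general
    {S : Fin N → Type*} [∀ i, Fintype (S i)] [∀ i, DecidableEq (S i)]
    (u : (∀ i, S i) → Fin N → ℝ)
    (x : ℝ → ∀ i, S i → ℝ)
    (hode : ∀ (t : ℝ) (i : Fin N) (s : S i),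
      HasDerivAt (fun τ => x τ i s) (x t i s * (expUpure u (x t) i s - expU u (x t) i)) t)
    (p : ∀ i, S i) (t : ℝ) :
    HasDerivAt (fun τ => zmass (x τ) p)
      (zmass (x t) p * ∑ q : ∀ i, S i, prodMat u p q * zmass (x t) q) t := by
  rw [sum_prodMat_mul_zmass]
  exact HasDerivAt.finsetProd_of_hasDerivAt_mul fun i _ => hode t i (p i)

/-- If `x(t)` is a solution of the replicator equation in the strategy
space, then the induced product distribution `z_p(t) = ∏_i x^i_{p_i}(t)` satisfies
`z_p' = z_p ⬝ Σ_q M_{p,q} z_q`. -/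
theorem statement8
    {S : Fin N → Type*} [∀ i, Fintype (S i)] [∀ i, DecidableEq (S i)] [∀ i, Nonempty (S i)]
    (u : (∀ i, S i) → Fin N → ℝ)
    (x : ℝ → ∀ i, S i → ℝ) (hmix : ∀ t, IsMixed (x t))
    (hode : ∀ (t : ℝ) (i : Fin N) (s : S i),
      HasDerivAt (fun τ => x τ i s) (x t i s * (expUpure u (x t) i s - expU u (x t) i)) t)
    (p : ∀ i, S i) (t : ℝ) :
    HasDerivAt (fun τ => zmass (x τ) p)
      (zmass (x t) p * ∑ q : ∀ i, S i, prodMat u p q * zmass (x t) q) t :=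
  statement8_general u x hode p t
end

section
/- Let u be a generic finite two-player game with product matrix M, let H be a sink equilibrium, let α ≠ γ ∈ S₁ and β ≠ δ ∈ S₂, and set p = (α,β), h = (γ,δ), a = (α,δ), b = (γ,β). If b, h ∈ H and p, a ∉ H, then M_{h,p} + M_{b,a} = (u₁(γ,δ) − u₁(α,δ)) + (u₁(γ,β) − u₁(α,β)), and this quantity is strictly positive. -/
open Finset Filter

variable {S₁ S₂ : Type*}

/-- If `b = (γ,β)` and `h = (γ,δ)` lie in the sink equilibrium `H` while
`p = (α,β)` and `a = (α,δ)` do not, then `M_{h,p} + M_{b,a}` equals the sum of the weights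
of the two arcs entering the component, and is strictly positive. -/
theorem statement12 (u₁ u₂ : S₁ × S₂ → ℝ) (hgen : Generic2 u₁ u₂)
    (H : Set (S₁ × S₂)) (hH : SinkEq2 u₁ u₂ H)
    (α γ : S₁) (β δ : S₂) (hαγ : α ≠ γ) (hβδ : β ≠ δ)
    (hb : (γ, β) ∈ H) (hh : (γ, δ) ∈ H) (hp : (α, β) ∉ H) (ha : (α, δ) ∉ H) :
    prodMat2 u₁ u₂ (γ, δ) (α, β) + prodMat2 u₁ u₂ (γ, β) (α, δ) =
      (u₁ (γ, δ) - u₁ (α, δ)) + (u₁ (γ, β) - u₁ (α, β)) ∧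
    0 < (u₁ (γ, δ) - u₁ (α, δ)) + (u₁ (γ, β) - u₁ (α, β)) := by
  obtain ⟨-, -, hsink⟩ := hH
  have h1 : u₁ (α, δ) < u₁ (γ, δ) := by
    have hc : Comp1 (γ, δ) (α, δ) := ⟨rfl, hαγ.symm⟩
    have hne := hgen.1 _ _ hc
    rcases lt_or_gt_of_ne hne with h | h
    · exact absurd (hsink _ hh _ (Or.inl ⟨hc, h⟩)) ha
    · exact h
  have h2 : u₁ (α, β) < u₁ (γ, β) := by
    have hc : Comp1 (γ, β) (α, β) := ⟨rfl, hαγ.symm⟩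
    have hne := hgen.1 _ _ hc
    rcases lt_or_gt_of_ne hne with h | h
    · exact absurd (hsink _ hb _ (Or.inl ⟨hc, h⟩)) hp
    · exact h
  refine ⟨by simp [prodMat2]; ring, by linarith⟩
end

section
/- Let u be a generic finite two-player game with product matrix M, and let H ⊊ Z be a pseudoconvex sink equilibrium. Then there exists ε₀ ∈ (0,1) such that every mixed profile x with 1 − ε₀ < Σ_{h∈H} z_h(x) < 1 satisfies Σ_{h∈H} z_h(x) · (Σ_{q∈Z} M_{h,q} z_q(x)) > 0; that is, the time derivative of the Lyapunov function z_H(x) = Σ_{h∈H} z_h(x) along the replicator dynamic is strictly positive in a punctured neighborhood of content(H). -/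
open Finset Filter

variable {S₁ S₂ : Type*}

/-- A point of `ℝ^{S₁} × ℝ^{S₂}` is a mixed profile if each factor is a probability
vector. -/
def IsMixed2 [Fintype S₁] [Fintype S₂] (xy : (S₁ → ℝ) × (S₂ → ℝ)) : Prop :=
  (∀ a, 0 ≤ xy.1 a) ∧ (∀ b, 0 ≤ xy.2 b) ∧ (∑ a, xy.1 a = 1) ∧ (∑ b, xy.2 b = 1)

namespace St15

/-- `cfun u₁ u₂ k q = - prodMat2 u₁ u₂ k q`. -/
def cfun (u₁ u₂ : S₁ × S₂ → ℝ) (k q : S₁ × S₂) : ℝ :=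
  (u₁ q - u₁ (k.1, q.2)) + (u₂ q - u₂ (q.1, k.2))

lemma cfun_eq_neg (u₁ u₂ : S₁ × S₂ → ℝ) (k q : S₁ × S₂) :
    cfun u₁ u₂ k q = - prodMat2 u₁ u₂ k q := by
  simp only [cfun, prodMat2]; ring

/-- Sink gap in the second player's payoff: same row, in vs out of `H`. -/
lemma gap2 {u₁ u₂ : S₁ × S₂ → ℝ} (hgen : Generic2 u₁ u₂) {H : Finset (S₁ × S₂)}
    (hH : SinkEq2 u₁ u₂ ↑H) {p k : S₁ × S₂} (hp : p ∈ H) (hk : k ∉ H)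
    (h1 : p.1 = k.1) : u₂ k < u₂ p := by
  have hne : p.2 ≠ k.2 := by
    intro h2
    exact hk ((show p = k from Prod.ext h1 h2) ▸ hp)
  have hcomp : Comp2 p k := ⟨h1, hne⟩
  have hneq : u₂ p ≠ u₂ k := hgen.2 p k hcomp
  rcases lt_or_gt_of_ne hneq with hlt | hgt
  · exact absurd (by exact_mod_cast hH.2.2 p (by exact_mod_cast hp) k (Or.inr ⟨hcomp, hlt⟩) : k ∈ H) hk
  · exact hgt

/-- Sink gap in the first player's payoff: same column, in vs out of `H`. -/
lemma gap1 {u₁ u₂ : S₁ × S₂ → ℝ} (hgen : Generic2 u₁ u₂) {H : Finset (S₁ × S₂)}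
    (hH : SinkEq2 u₁ u₂ ↑H) {p k : S₁ × S₂} (hp : p ∈ H) (hk : k ∉ H)
    (h2 : p.2 = k.2) : u₁ k < u₁ p := by
  have hne : p.1 ≠ k.1 := by
    intro h1
    exact hk ((show p = k from Prod.ext h1 h2) ▸ hp)
  have hcomp : Comp1 p k := ⟨h2, hne⟩
  have hneq : u₁ p ≠ u₁ k := hgen.1 p k hcomp
  rcases lt_or_gt_of_ne hneq with hlt | hgt
  · exact absurd (by exact_mod_cast hH.2.2 p (by exact_mod_cast hp) k (Or.inl ⟨hcomp, hlt⟩) : k ∈ H) hk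
  · exact hgt

lemma cavity_pos {u₁ u₂ : S₁ × S₂ → ℝ} {H : Finset (S₁ × S₂)}
    (hpc : Pseudoconvex2 u₁ u₂ ↑H) {k q : S₁ × S₂} (hk : k ∉ H) (hq : q ∈ H)
    (h1 : k.1 ≠ q.1) (h2 : k.2 ≠ q.2) (hkq : (k.1, q.2) ∈ H) (hqk : (q.1, k.2) ∈ H) :
    0 < cfun u₁ u₂ k q := by
  have := hpc q.1 k.1 q.2 k.2 (Ne.symm h1) (Ne.symm h2)
    (by exact_mod_cast (by rwa [Prod.mk.eta] : (q.1, q.2) ∈ H))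
    (by exact_mod_cast hkq) (by exact_mod_cast hqk)
    (by simpa using (by rwa [Prod.mk.eta] : (k.1, k.2) ∉ H))
  simp only [Prod.mk.eta] at this
  simp only [cfun]
  linarith

end St15
namespace St15

/-- A uniform positive lower bound on all gap and cavity quantities. -/
lemma exists_lam [Fintype S₁] [Fintype S₂] {u₁ u₂ : S₁ × S₂ → ℝ}
    (hgen : Generic2 u₁ u₂) {H : Finset (S₁ × S₂)} (hH : SinkEq2 u₁ u₂ ↑H)
    (hpc : Pseudoconvex2 u₁ u₂ ↑H) :
    ∃ lam > (0 : ℝ),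
      (∀ p k : S₁ × S₂, p ∈ H → k ∉ H → p.1 = k.1 → lam ≤ u₂ p - u₂ k) ∧
      (∀ p k : S₁ × S₂, p ∈ H → k ∉ H → p.2 = k.2 → lam ≤ u₁ p - u₁ k) ∧
      (∀ k q : S₁ × S₂, k ∉ H → q ∈ H → k.1 ≠ q.1 → k.2 ≠ q.2 →
        (k.1, q.2) ∈ H → (q.1, k.2) ∈ H → lam ≤ cfun u₁ u₂ k q) := by
  classical
  obtain ⟨p₀, hp₀⟩ := hH.1
  have hne : (Finset.univ : Finset ((S₁ × S₂) × (S₁ × S₂))).Nonempty := ⟨(p₀, p₀), mem_univ _⟩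
  set G : (S₁ × S₂) × (S₁ × S₂) → ℝ := fun e =>
    min (if e.1 ∈ H ∧ e.2 ∉ H ∧ e.1.1 = e.2.1 then u₂ e.1 - u₂ e.2 else 1)
      (min (if e.1 ∈ H ∧ e.2 ∉ H ∧ e.1.2 = e.2.2 then u₁ e.1 - u₁ e.2 else 1)
        (if e.1 ∉ H ∧ e.2 ∈ H ∧ e.1.1 ≠ e.2.1 ∧ e.1.2 ≠ e.2.2 ∧ (e.1.1, e.2.2) ∈ H ∧
            (e.2.1, e.1.2) ∈ H then cfun u₁ u₂ e.1 e.2 else 1)) with hG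
  refine ⟨Finset.univ.inf' hne G, ?_, ?_, ?_, ?_⟩
  · rw [gt_iff_lt, Finset.lt_inf'_iff]
    intro e _
    refine lt_min ?_ (lt_min ?_ ?_)
    · split_ifs with h
      · exact sub_pos.2 (gap2 hgen hH h.1 h.2.1 h.2.2)
      · exact one_pos
    · split_ifs with h
      · exact sub_pos.2 (gap1 hgen hH h.1 h.2.1 h.2.2)
      · exact one_pos
    · split_ifs with h
      · exact cavity_pos hpc h.1 h.2.1 h.2.2.1 h.2.2.2.1 h.2.2.2.2.1 h.2.2.2.2.2
      · exact one_pos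
  · intro p k hp hk h1
    refine le_trans (Finset.inf'_le G (mem_univ (p, k))) ?_
    refine le_trans (min_le_left _ _) ?_
    rw [if_pos ⟨hp, hk, h1⟩]
  · intro p k hp hk h2
    refine le_trans (Finset.inf'_le G (mem_univ (p, k))) ?_
    refine le_trans (le_trans (min_le_right _ _) (min_le_left _ _)) ?_
    rw [if_pos ⟨hp, hk, h2⟩]
  · intro k q hk hq h1 h2 hkq hqk
    refine le_trans (Finset.inf'_le G (mem_univ (k, q))) ?_
    refine le_trans (le_trans (min_le_right _ _) (min_le_right _ _)) ?_
    rw [if_pos ⟨hk, hq, h1, h2, hkq, hqk⟩]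

lemma exists_Cb [Fintype S₁] [Fintype S₂] (u₁ u₂ : S₁ × S₂ → ℝ) :
    ∃ Cb : ℝ, 0 ≤ Cb ∧ ∀ k q : S₁ × S₂, |cfun u₁ u₂ k q| ≤ Cb := by
  refine ⟨∑ e : (S₁ × S₂) × (S₁ × S₂), |cfun u₁ u₂ e.1 e.2|,
    Finset.sum_nonneg fun e _ => abs_nonneg _, fun k q => ?_⟩
  exact Finset.single_le_sum (f := fun e : (S₁ × S₂) × (S₁ × S₂) => |cfun u₁ u₂ e.1 e.2|) (fun e _ => abs_nonneg _) (mem_univ (k, q))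

/-- The full sum over all profiles of the replicator derivative terms vanishes. -/
lemma sum_univ_eq_zero [Fintype S₁] [Fintype S₂] (u₁ u₂ : S₁ × S₂ → ℝ)
    (x : S₁ → ℝ) (y : S₂ → ℝ) (hx : ∑ a, x a = 1) (hy : ∑ b, y b = 1) :
    ∑ p : S₁ × S₂, (x p.1 * y p.2) *
      ∑ q : S₁ × S₂, prodMat2 u₁ u₂ p q * (x q.1 * y q.2) = 0 := by
  have key1 : ∀ c : S₁, ∑ q : S₁ × S₂, u₁ (c, q.2) * (x q.1 * y q.2)
      = ∑ b, y b * u₁ (c, b) := by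
    intro c
    rw [Fintype.sum_prod_type, Finset.sum_comm]
    refine Finset.sum_congr rfl fun b _ => ?_
    calc ∑ a, u₁ (c, b) * (x a * y b) = (∑ a, x a) * (y b * u₁ (c, b)) := by
          rw [Finset.sum_mul]; exact Finset.sum_congr rfl fun a _ => by ring
      _ = y b * u₁ (c, b) := by rw [hx, one_mul]
  have key2 : ∀ d : S₂, ∑ q : S₁ × S₂, u₂ (q.1, d) * (x q.1 * y q.2)
      = ∑ a, x a * u₂ (a, d) := by
    intro d
    rw [Fintype.sum_prod_type]
    refine Finset.sum_congr rfl fun a _ => ?_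
    calc ∑ b, u₂ (a, d) * (x a * y b) = (∑ b, y b) * (x a * u₂ (a, d)) := by
          rw [Finset.sum_mul]; exact Finset.sum_congr rfl fun b _ => by ring
      _ = x a * u₂ (a, d) := by rw [hy, one_mul]
  set U : ℝ := ∑ q : S₁ × S₂, (x q.1 * y q.2) * (u₁ q + u₂ q) with hU
  have hinner : ∀ p : S₁ × S₂,
      ∑ q : S₁ × S₂, prodMat2 u₁ u₂ p q * (x q.1 * y q.2)
        = (∑ b, y b * u₁ (p.1, b)) + (∑ a, x a * u₂ (a, p.2)) - U := by
    intro p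
    have expand : ∀ q : S₁ × S₂, prodMat2 u₁ u₂ p q * (x q.1 * y q.2)
        = u₁ (p.1, q.2) * (x q.1 * y q.2) + u₂ (q.1, p.2) * (x q.1 * y q.2)
          - (x q.1 * y q.2) * (u₁ q + u₂ q) := fun q => by
      simp only [prodMat2]; ring
    rw [Finset.sum_congr rfl fun q _ => expand q, Finset.sum_sub_distrib,
      Finset.sum_add_distrib, key1, key2, hU]
  rw [Finset.sum_congr rfl fun p _ => by rw [hinner p]]
  have expand2 : ∀ p : S₁ × S₂,
      (x p.1 * y p.2) * ((∑ b, y b * u₁ (p.1, b)) + (∑ a, x a * u₂ (a, p.2)) - U)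
      = (x p.1 * y p.2) * (∑ b, y b * u₁ (p.1, b))
        + (x p.1 * y p.2) * (∑ a, x a * u₂ (a, p.2)) - (x p.1 * y p.2) * U :=
    fun p => by ring
  rw [Finset.sum_congr rfl fun p _ => expand2 p, Finset.sum_sub_distrib,
    Finset.sum_add_distrib]
  have hz1 : ∑ p : S₁ × S₂, (x p.1 * y p.2) = 1 := by
    rw [Fintype.sum_prod_type]
    calc ∑ a, ∑ b, x a * y b = ∑ a, x a * ∑ b, y b := by
          exact Finset.sum_congr rfl fun a _ => (Finset.mul_sum _ _ _).symm
      _ = 1 := by rw [hy]; simpa using hx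
  have t1 : ∑ p : S₁ × S₂, (x p.1 * y p.2) * (∑ b, y b * u₁ (p.1, b))
      = ∑ q : S₁ × S₂, (x q.1 * y q.2) * u₁ q := by
    rw [Fintype.sum_prod_type, Fintype.sum_prod_type]
    refine Finset.sum_congr rfl fun a _ => ?_
    calc ∑ b, x a * y b * (∑ b', y b' * u₁ (a, b'))
        = (∑ b, y b) * (x a * (∑ b', y b' * u₁ (a, b'))) := by
          rw [Finset.sum_mul]; exact Finset.sum_congr rfl fun b _ => by ring
      _ = ∑ b, x a * y b * u₁ (a, b) := by
          rw [hy, one_mul, Finset.mul_sum]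
          exact Finset.sum_congr rfl fun b _ => by ring
  have t2 : ∑ p : S₁ × S₂, (x p.1 * y p.2) * (∑ a, x a * u₂ (a, p.2))
      = ∑ q : S₁ × S₂, (x q.1 * y q.2) * u₂ q := by
    rw [Fintype.sum_prod_type, Fintype.sum_prod_type]
    rw [Finset.sum_comm (f := fun a b => x a * y b * (∑ a', x a' * u₂ (a', b))),
      Finset.sum_comm (f := fun a b => x a * y b * u₂ (a, b))]
    refine Finset.sum_congr rfl fun b _ => ?_
    calc ∑ a, x a * y b * (∑ a', x a' * u₂ (a', b))
        = (∑ a, x a) * (y b * (∑ a', x a' * u₂ (a', b))) := by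
          rw [Finset.sum_mul]; exact Finset.sum_congr rfl fun a _ => by ring
      _ = ∑ a, x a * y b * u₂ (a, b) := by
          rw [hx, one_mul, Finset.mul_sum]
          exact Finset.sum_congr rfl fun a _ => by ring
  have t3 : ∑ p : S₁ × S₂, (x p.1 * y p.2) * U = U := by
    rw [← Finset.sum_mul, hz1, one_mul]
  rw [t1, t2, t3, hU]
  rw [← Finset.sum_add_distrib]
  rw [Finset.sum_congr rfl fun q _ => (mul_add (x q.1 * y q.2) (u₁ q) (u₂ q)).symm]
  ring

end St15
namespace St15

lemma key [Fintype S₁] [Fintype S₂] [DecidableEq S₁] [DecidableEq S₂] {u₁ u₂ : S₁ × S₂ → ℝ}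
    {H : Finset (S₁ × S₂)} {lam Cb : ℝ}
    (hg1 : ∀ p k : S₁ × S₂, p ∈ H → k ∉ H → p.1 = k.1 → lam ≤ u₂ p - u₂ k)
    (hg2 : ∀ p k : S₁ × S₂, p ∈ H → k ∉ H → p.2 = k.2 → lam ≤ u₁ p - u₁ k)
    (hg3 : ∀ k q : S₁ × S₂, k ∉ H → q ∈ H → k.1 ≠ q.1 → k.2 ≠ q.2 →
        (k.1, q.2) ∈ H → (q.1, k.2) ∈ H → lam ≤ cfun u₁ u₂ k q)
    (hlam0 : 0 < lam) (hCb0 : 0 ≤ Cb) (hCb : ∀ k q, |cfun u₁ u₂ k q| ≤ Cb)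
    (x : S₁ → ℝ) (y : S₂ → ℝ) (hx0 : ∀ a, 0 ≤ x a) (hy0 : ∀ b, 0 ≤ y b) :
    lam * ((∑ k ∈ Hᶜ, x k.1 * y k.2) * (∑ h ∈ H, x h.1 * y h.2))
      - (lam + 2 * Cb) * ((∑ k ∈ Hᶜ, x k.1 * y k.2) * (∑ k ∈ Hᶜ, x k.1 * y k.2))
      ≤ ∑ k ∈ Hᶜ, ∑ q : S₁ × S₂, ((x k.1 * y k.2) * (x q.1 * y q.2)) * cfun u₁ u₂ k q := by
  classical
  set w : (S₁ × S₂) × (S₁ × S₂) → ℝ :=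
    fun e => (x e.1.1 * y e.1.2) * (x e.2.1 * y e.2.2) with hw
  set F : (S₁ × S₂) × (S₁ × S₂) → ℝ := fun e => w e * cfun u₁ u₂ e.1 e.2 with hF
  have hw0 : ∀ e, 0 ≤ w e := fun e => by
    rw [hw]
    exact mul_nonneg (mul_nonneg (hx0 _) (hy0 _)) (mul_nonneg (hx0 _) (hy0 _))
  have hwFle : ∀ e, -(Cb * w e) ≤ F e := fun e => by
    have h1 : -Cb ≤ cfun u₁ u₂ e.1 e.2 := (abs_le.mp (hCb e.1 e.2)).1
    calc -(Cb * w e) = w e * (-Cb) := by ring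
      _ ≤ w e * cfun u₁ u₂ e.1 e.2 := mul_le_mul_of_nonneg_left h1 (hw0 e)
      _ = F e := by rw [hF]
  set E : ℝ := ∑ k ∈ Hᶜ, x k.1 * y k.2 with hE
  set S : ℝ := ∑ h ∈ H, x h.1 * y h.2 with hS
  -- the involution used for the `B`/`C` pairing and the `C₂` bound
  set s : (S₁ × S₂) × (S₁ × S₂) → (S₁ × S₂) × (S₁ × S₂) :=
    fun e => ((e.2.1, e.1.2), (e.1.1, e.2.2)) with hs
  set t : (S₁ × S₂) × (S₁ × S₂) → (S₁ × S₂) × (S₁ × S₂) :=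
    fun e => ((e.1.1, e.2.2), (e.2.1, e.1.2)) with ht
  have hss : ∀ e, s (s e) = e := fun e => by rw [hs]
  have htt : ∀ e, t (t e) = e := fun e => by rw [ht]
  have hws : ∀ e, w (s e) = w e := fun e => by rw [hw, hs]; ring
  have hwt : ∀ e, w (t e) = w e := fun e => by rw [hw, ht]; ring
  -- the four parts
  set A : Finset ((S₁ × S₂) × (S₁ × S₂)) := Hᶜ ×ˢ H with hA
  set A₁ : Finset ((S₁ × S₂) × (S₁ × S₂)) := A.filter
    (fun e => e.2.1 = e.1.1 ∨ e.2.2 = e.1.2 ∨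
      ((e.1.1, e.2.2) ∈ H ∧ (e.2.1, e.1.2) ∈ H)) with hA₁
  set A₂ : Finset ((S₁ × S₂) × (S₁ × S₂)) := A.filter
    (fun e => ¬ (e.2.1 = e.1.1 ∨ e.2.2 = e.1.2 ∨
      ((e.1.1, e.2.2) ∈ H ∧ (e.2.1, e.1.2) ∈ H))) with hA₂
  set B₁ : Finset ((S₁ × S₂) × (S₁ × S₂)) := A₂.filter
    (fun e => (e.1.1, e.2.2) ∈ H) with hB₁
  set B₂ : Finset ((S₁ × S₂) × (S₁ × S₂)) := A₂.filter
    (fun e => ¬ ((e.1.1, e.2.2) ∈ H)) with hB₂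
  set C₁ : Finset ((S₁ × S₂) × (S₁ × S₂)) := B₂.filter
    (fun e => (e.2.1, e.1.2) ∈ H) with hC₁
  set C₂ : Finset ((S₁ × S₂) × (S₁ × S₂)) := B₂.filter
    (fun e => ¬ ((e.2.1, e.1.2) ∈ H)) with hC₂
  -- membership unfoldings (destructured form)
  have memA : ∀ (γ : S₁) (δ : S₂) (a : S₁) (b : S₂), (((γ,δ),(a,b)) ∈ A) ↔
      ((γ,δ) ∉ H ∧ (a,b) ∈ H) := by
    intro γ δ a b; rw [hA, Finset.mem_product, Finset.mem_compl]
  have memA₁ : ∀ (γ : S₁) (δ : S₂) (a : S₁) (b : S₂), (((γ,δ),(a,b)) ∈ A₁) ↔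
      ((((γ,δ),(a,b)) ∈ A) ∧ (a = γ ∨ b = δ ∨ ((γ, b) ∈ H ∧ (a, δ) ∈ H))) := by
    intro γ δ a b; rw [hA₁, Finset.mem_filter]
  have memA₂ : ∀ (γ : S₁) (δ : S₂) (a : S₁) (b : S₂), (((γ,δ),(a,b)) ∈ A₂) ↔
      ((((γ,δ),(a,b)) ∈ A) ∧ ¬ (a = γ ∨ b = δ ∨ ((γ, b) ∈ H ∧ (a, δ) ∈ H))) := by
    intro γ δ a b; rw [hA₂, Finset.mem_filter]
  have memB₁ : ∀ (γ : S₁) (δ : S₂) (a : S₁) (b : S₂), (((γ,δ),(a,b)) ∈ B₁) ↔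
      ((((γ,δ),(a,b)) ∈ A₂) ∧ (γ, b) ∈ H) := by
    intro γ δ a b; rw [hB₁, Finset.mem_filter]
  have memB₂ : ∀ (γ : S₁) (δ : S₂) (a : S₁) (b : S₂), (((γ,δ),(a,b)) ∈ B₂) ↔
      ((((γ,δ),(a,b)) ∈ A₂) ∧ ¬ ((γ, b) ∈ H)) := by
    intro γ δ a b; rw [hB₂, Finset.mem_filter]
  have memC₁ : ∀ (γ : S₁) (δ : S₂) (a : S₁) (b : S₂), (((γ,δ),(a,b)) ∈ C₁) ↔
      ((((γ,δ),(a,b)) ∈ B₂) ∧ (a, δ) ∈ H) := by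
    intro γ δ a b; rw [hC₁, Finset.mem_filter]
  have memC₂ : ∀ (γ : S₁) (δ : S₂) (a : S₁) (b : S₂), (((γ,δ),(a,b)) ∈ C₂) ↔
      ((((γ,δ),(a,b)) ∈ B₂) ∧ ¬ ((a, δ) ∈ H)) := by
    intro γ δ a b; rw [hC₂, Finset.mem_filter]
  -- sum decompositions
  have hsplitF : ∑ e ∈ A, F e = ∑ e ∈ A₁, F e + ∑ e ∈ B₁, F e + ∑ e ∈ C₁, F e
      + ∑ e ∈ C₂, F e := by
    have e1 := Finset.sum_filter_add_sum_filter_not A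
      (fun e => e.2.1 = e.1.1 ∨ e.2.2 = e.1.2 ∨
        ((e.1.1, e.2.2) ∈ H ∧ (e.2.1, e.1.2) ∈ H)) F
    have e2 := Finset.sum_filter_add_sum_filter_not A₂ (fun e => (e.1.1, e.2.2) ∈ H) F
    have e3 := Finset.sum_filter_add_sum_filter_not B₂ (fun e => (e.2.1, e.1.2) ∈ H) F
    rw [← hA₁, ← hA₂] at e1
    rw [← hB₁, ← hB₂] at e2
    rw [← hC₁, ← hC₂] at e3
    linarith
  have hsplitw : ∑ e ∈ A, w e = ∑ e ∈ A₁, w e + ∑ e ∈ B₁, w e + ∑ e ∈ C₁, w e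
      + ∑ e ∈ C₂, w e := by
    have e1 := Finset.sum_filter_add_sum_filter_not A
      (fun e => e.2.1 = e.1.1 ∨ e.2.2 = e.1.2 ∨
        ((e.1.1, e.2.2) ∈ H ∧ (e.2.1, e.1.2) ∈ H)) w
    have e2 := Finset.sum_filter_add_sum_filter_not A₂ (fun e => (e.1.1, e.2.2) ∈ H) w
    have e3 := Finset.sum_filter_add_sum_filter_not B₂ (fun e => (e.2.1, e.1.2) ∈ H) w
    rw [← hA₁, ← hA₂] at e1
    rw [← hB₁, ← hB₂] at e2
    rw [← hC₁, ← hC₂] at e3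
    linarith
  have hAw : ∑ e ∈ A, w e = E * S := by
    rw [hE, hS, Finset.sum_mul_sum, hA, Finset.sum_product]
  have hKw : ∑ e ∈ Hᶜ ×ˢ Hᶜ, w e = E * E := by
    rw [hE, Finset.sum_mul_sum, Finset.sum_product]
  -- bound on A₁ : direct positivity
  have hA₁b : lam * ∑ e ∈ A₁, w e ≤ ∑ e ∈ A₁, F e := by
    rw [Finset.mul_sum]
    refine Finset.sum_le_sum ?_
    rintro ⟨⟨γ, δ⟩, a, b⟩ he
    rw [memA₁] at he
    obtain ⟨heA, hP⟩ := he
    rw [memA] at heA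
    obtain ⟨hk, hq⟩ := heA
    have hwnn : 0 ≤ w ((γ, δ), (a, b)) := hw0 _
    have hlc : lam ≤ cfun u₁ u₂ (γ, δ) (a, b) := by
      rcases hP with h1 | h2 | ⟨hm1, hm2⟩
      · subst h1
        have hgap := hg1 (a, b) (a, δ) hq hk rfl
        have hc : cfun u₁ u₂ (a, δ) (a, b)
            = (u₁ (a, b) - u₁ (a, b)) + (u₂ (a, b) - u₂ (a, δ)) := rfl
        rw [hc]; linarith
      · subst h2
        have hgap := hg2 (a, b) (γ, b) hq hk rfl
        have hc : cfun u₁ u₂ (γ, b) (a, b)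
            = (u₁ (a, b) - u₁ (γ, b)) + (u₂ (a, b) - u₂ (a, b)) := rfl
        rw [hc]; linarith
      · have hne1 : γ ≠ a := fun h => hk (by rw [h]; exact hm2)
        have hne2 : δ ≠ b := fun h => hk (by rw [h]; exact hm1)
        exact hg3 (γ, δ) (a, b) hk hq hne1 hne2 hm1 hm2
    calc lam * w ((γ, δ), (a, b)) = w ((γ, δ), (a, b)) * lam := by ring
      _ ≤ w ((γ, δ), (a, b)) * cfun u₁ u₂ (γ, δ) (a, b) :=
          mul_le_mul_of_nonneg_left hlc hwnn
      _ = F ((γ, δ), (a, b)) := rfl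
  -- bound on B₁ : pairing via the involution s
  have hB₁mem : ∀ e ∈ B₁, s e ∈ B₁ := by
    rintro ⟨⟨γ, δ⟩, a, b⟩ he
    rw [memB₁] at he
    obtain ⟨heA₂, hP₂⟩ := he
    rw [memA₂] at heA₂
    obtain ⟨heA, hnP⟩ := heA₂
    rw [memA] at heA
    obtain ⟨hk, hq⟩ := heA
    push_neg at hnP
    obtain ⟨hne1, hne2, hnot⟩ := hnP
    have had : (a, δ) ∉ H := fun h => hnot hP₂ h
    show ((a, δ), (γ, b)) ∈ B₁
    rw [memB₁, memA₂, memA]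
    refine ⟨⟨⟨had, hP₂⟩, ?_⟩, hq⟩
    push_neg
    exact ⟨fun h => hne1 h.symm, hne2, fun h1 h2 => hk h2⟩
  have hB₁swap : ∑ e ∈ B₁, F (s e) = ∑ e ∈ B₁, F e :=
    Finset.sum_nbij' s s hB₁mem hB₁mem (fun e _ => hss e) (fun e _ => hss e)
      (fun e _ => rfl)
  have hB₁pair : ∀ e ∈ B₁, 2 * (lam * w e) ≤ F e + F (s e) := by
    rintro ⟨⟨γ, δ⟩, a, b⟩ he
    rw [memB₁] at he
    obtain ⟨heA₂, hP₂⟩ := he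
    rw [memA₂] at heA₂
    obtain ⟨heA, hnP⟩ := heA₂
    rw [memA] at heA
    obtain ⟨hk, hq⟩ := heA
    push_neg at hnP
    obtain ⟨hne1, hne2, hnot⟩ := hnP
    have had : (a, δ) ∉ H := fun h => hnot hP₂ h
    have g1 : lam ≤ u₂ (a, b) - u₂ (a, δ) := hg1 (a, b) (a, δ) hq had rfl
    have g2 : lam ≤ u₂ (γ, b) - u₂ (γ, δ) := hg1 (γ, b) (γ, δ) hP₂ hk rfl
    have hwnn : 0 ≤ w ((γ, δ), (a, b)) := hw0 _
    have hcc : F ((γ, δ), (a, b)) + F (s ((γ, δ), (a, b)))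
        = w ((γ, δ), (a, b))
          * ((u₂ (a, b) - u₂ (a, δ)) + (u₂ (γ, b) - u₂ (γ, δ))) := by
      have hws' : w (s ((γ, δ), (a, b))) = w ((γ, δ), (a, b)) := hws _
      have hcs : cfun u₁ u₂ (γ, δ) (a, b) + cfun u₁ u₂ (a, δ) (γ, b)
          = (u₂ (a, b) - u₂ (a, δ)) + (u₂ (γ, b) - u₂ (γ, δ)) := by
        show ((u₁ (a, b) - u₁ (γ, b)) + (u₂ (a, b) - u₂ (a, δ)))
          + ((u₁ (γ, b) - u₁ (a, b)) + (u₂ (γ, b) - u₂ (γ, δ))) = _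
        ring
      calc F ((γ, δ), (a, b)) + F (s ((γ, δ), (a, b)))
          = w ((γ, δ), (a, b)) * cfun u₁ u₂ (γ, δ) (a, b)
            + w (s ((γ, δ), (a, b))) * cfun u₁ u₂ (a, δ) (γ, b) := rfl
        _ = w ((γ, δ), (a, b))
            * (cfun u₁ u₂ (γ, δ) (a, b) + cfun u₁ u₂ (a, δ) (γ, b)) := by
            rw [hws']; ring
        _ = _ := by rw [hcs]
    rw [hcc]
    nlinarith [mul_le_mul_of_nonneg_left (add_le_add g1 g2) hwnn]
  have hB₁b : lam * ∑ e ∈ B₁, w e ≤ ∑ e ∈ B₁, F e := by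
    have h2 : ∑ e ∈ B₁, 2 * (lam * w e) ≤ ∑ e ∈ B₁, (F e + F (s e)) :=
      Finset.sum_le_sum hB₁pair
    rw [Finset.sum_add_distrib, hB₁swap] at h2
    have h3 : ∑ e ∈ B₁, 2 * (lam * w e) = 2 * (lam * ∑ e ∈ B₁, w e) := by
      rw [Finset.mul_sum, Finset.mul_sum]
    linarith
  -- bound on C₁ : pairing via the involution t
  have hC₁mem : ∀ e ∈ C₁, t e ∈ C₁ := by
    rintro ⟨⟨γ, δ⟩, a, b⟩ he
    rw [memC₁] at he
    obtain ⟨heB₂, hP₃⟩ := he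
    rw [memB₂] at heB₂
    obtain ⟨heA₂, hnP₂⟩ := heB₂
    rw [memA₂] at heA₂
    obtain ⟨heA, hnP⟩ := heA₂
    rw [memA] at heA
    obtain ⟨hk, hq⟩ := heA
    push_neg at hnP
    obtain ⟨hne1, hne2, hnot⟩ := hnP
    show ((γ, b), (a, δ)) ∈ C₁
    rw [memC₁, memB₂, memA₂, memA]
    refine ⟨⟨⟨⟨hnP₂, hP₃⟩, ?_⟩, fun h => hk h⟩, hq⟩
    push_neg
    exact ⟨hne1, fun h => hne2 h.symm, fun h1 h2 => hk h1⟩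
  have hC₁swap : ∑ e ∈ C₁, F (t e) = ∑ e ∈ C₁, F e :=
    Finset.sum_nbij' t t hC₁mem hC₁mem (fun e _ => htt e) (fun e _ => htt e)
      (fun e _ => rfl)
  have hC₁pair : ∀ e ∈ C₁, 2 * (lam * w e) ≤ F e + F (t e) := by
    rintro ⟨⟨γ, δ⟩, a, b⟩ he
    rw [memC₁] at he
    obtain ⟨heB₂, hP₃⟩ := he
    rw [memB₂] at heB₂
    obtain ⟨heA₂, hnP₂⟩ := heB₂
    rw [memA₂] at heA₂
    obtain ⟨heA, hnP⟩ := heA₂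
    rw [memA] at heA
    obtain ⟨hk, hq⟩ := heA
    have g1 : lam ≤ u₁ (a, b) - u₁ (γ, b) := hg2 (a, b) (γ, b) hq hnP₂ rfl
    have g2 : lam ≤ u₁ (a, δ) - u₁ (γ, δ) := hg2 (a, δ) (γ, δ) hP₃ hk rfl
    have hwnn : 0 ≤ w ((γ, δ), (a, b)) := hw0 _
    have hcc : F ((γ, δ), (a, b)) + F (t ((γ, δ), (a, b)))
        = w ((γ, δ), (a, b))
          * ((u₁ (a, b) - u₁ (γ, b)) + (u₁ (a, δ) - u₁ (γ, δ))) := by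
      have hwt' : w (t ((γ, δ), (a, b))) = w ((γ, δ), (a, b)) := hwt _
      have hcs : cfun u₁ u₂ (γ, δ) (a, b) + cfun u₁ u₂ (γ, b) (a, δ)
          = (u₁ (a, b) - u₁ (γ, b)) + (u₁ (a, δ) - u₁ (γ, δ)) := by
        show ((u₁ (a, b) - u₁ (γ, b)) + (u₂ (a, b) - u₂ (a, δ)))
          + ((u₁ (a, δ) - u₁ (γ, δ)) + (u₂ (a, δ) - u₂ (a, b))) = _
        ring
      calc F ((γ, δ), (a, b)) + F (t ((γ, δ), (a, b)))
          = w ((γ, δ), (a, b)) * cfun u₁ u₂ (γ, δ) (a, b)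
            + w (t ((γ, δ), (a, b))) * cfun u₁ u₂ (γ, b) (a, δ) := rfl
        _ = w ((γ, δ), (a, b))
            * (cfun u₁ u₂ (γ, δ) (a, b) + cfun u₁ u₂ (γ, b) (a, δ)) := by
            rw [hwt']; ring
        _ = _ := by rw [hcs]
    rw [hcc]
    nlinarith [mul_le_mul_of_nonneg_left (add_le_add g1 g2) hwnn]
  have hC₁b : lam * ∑ e ∈ C₁, w e ≤ ∑ e ∈ C₁, F e := by
    have h2 : ∑ e ∈ C₁, 2 * (lam * w e) ≤ ∑ e ∈ C₁, (F e + F (t e)) :=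
      Finset.sum_le_sum hC₁pair
    rw [Finset.sum_add_distrib, hC₁swap] at h2
    have h3 : ∑ e ∈ C₁, 2 * (lam * w e) = 2 * (lam * ∑ e ∈ C₁, w e) := by
      rw [Finset.mul_sum, Finset.mul_sum]
    linarith
  -- bound on C₂ : second-order terms
  have hC₂w : ∑ e ∈ C₂, w e ≤ E * E := by
    have hmem : ∀ e ∈ C₂, t e ∈ Hᶜ ×ˢ Hᶜ := by
      rintro ⟨⟨γ, δ⟩, a, b⟩ he
      rw [memC₂] at he
      obtain ⟨heB₂, hnP₃⟩ := he
      rw [memB₂] at heB₂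
      obtain ⟨heA₂, hnP₂⟩ := heB₂
      show ((γ, b), (a, δ)) ∈ Hᶜ ×ˢ Hᶜ
      rw [Finset.mem_product, Finset.mem_compl, Finset.mem_compl]
      exact ⟨hnP₂, hnP₃⟩
    have hinj : ∀ e₁ ∈ C₂, ∀ e₂ ∈ C₂, t e₁ = t e₂ → e₁ = e₂ := by
      intro e₁ _ e₂ _ h
      have := congrArg t h
      rwa [htt, htt] at this
    calc ∑ e ∈ C₂, w e = ∑ e ∈ C₂, w (t e) :=
          Finset.sum_congr rfl fun e _ => (hwt e).symm
      _ = ∑ e ∈ C₂.image t, w e := (Finset.sum_image hinj).symm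
      _ ≤ ∑ e ∈ Hᶜ ×ˢ Hᶜ, w e := by
          refine Finset.sum_le_sum_of_subset_of_nonneg ?_ (fun i _ _ => hw0 i)
          intro e' he'
          rw [Finset.mem_image] at he'
          obtain ⟨e, he, rfl⟩ := he'
          exact hmem e he
      _ = E * E := hKw
  have hC₂b : -(Cb * (E * E)) ≤ ∑ e ∈ C₂, F e := by
    have h1 : ∑ e ∈ C₂, -(Cb * w e) ≤ ∑ e ∈ C₂, F e :=
      Finset.sum_le_sum (fun e _ => hwFle e)
    have h2 : ∑ e ∈ C₂, -(Cb * w e) = -(Cb * ∑ e ∈ C₂, w e) := by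
      rw [Finset.mul_sum, Finset.sum_neg_distrib]
    have h3 := mul_le_mul_of_nonneg_left hC₂w hCb0
    linarith
  -- bound on the Hᶜ × Hᶜ block
  have hKb : -(Cb * (E * E)) ≤ ∑ e ∈ Hᶜ ×ˢ Hᶜ, F e := by
    have h1 : ∑ e ∈ Hᶜ ×ˢ Hᶜ, -(Cb * w e) ≤ ∑ e ∈ Hᶜ ×ˢ Hᶜ, F e :=
      Finset.sum_le_sum (fun e _ => hwFle e)
    have h2 : ∑ e ∈ Hᶜ ×ˢ Hᶜ, -(Cb * w e) = -(Cb * ∑ e ∈ Hᶜ ×ˢ Hᶜ, w e) := by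
      rw [Finset.mul_sum, Finset.sum_neg_distrib]
    rw [hKw] at h2
    linarith
  -- rewrite the target sum
  have hgoal : ∑ k ∈ Hᶜ, ∑ q : S₁ × S₂, ((x k.1 * y k.2) * (x q.1 * y q.2))
      * cfun u₁ u₂ k q = ∑ e ∈ A, F e + ∑ e ∈ Hᶜ ×ˢ Hᶜ, F e := by
    rw [hA, Finset.sum_product, Finset.sum_product, ← Finset.sum_add_distrib]
    refine Finset.sum_congr rfl fun k _ => ?_
    rw [Finset.sum_add_sum_compl H (fun q => F (k, q))]
  rw [hgoal]
  have h5 : ∑ e ∈ A₁, w e + ∑ e ∈ B₁, w e + ∑ e ∈ C₁, w e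
      = E * S - ∑ e ∈ C₂, w e := by linarith
  have h6 : lam * (∑ e ∈ A₁, w e + ∑ e ∈ B₁, w e + ∑ e ∈ C₁, w e)
      = lam * (E * S) - lam * ∑ e ∈ C₂, w e := by rw [h5]; ring
  have h7 : lam * ∑ e ∈ C₂, w e ≤ lam * (E * E) :=
    mul_le_mul_of_nonneg_left hC₂w hlam0.le
  have h8 : lam * (∑ e ∈ A₁, w e + ∑ e ∈ B₁, w e + ∑ e ∈ C₁, w e)
      = lam * ∑ e ∈ A₁, w e + lam * ∑ e ∈ B₁, w e + lam * ∑ e ∈ C₁, w e := by ring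
  have h9 : (lam + 2 * Cb) * (E * E)
      = lam * (E * E) + Cb * (E * E) + Cb * (E * E) := by ring
  linarith

end St15
namespace St15

lemma zsum_one [Fintype S₁] [Fintype S₂] (x : S₁ → ℝ) (y : S₂ → ℝ)
    (hx : ∑ a, x a = 1) (hy : ∑ b, y b = 1) :
    ∑ p : S₁ × S₂, x p.1 * y p.2 = 1 := by
  rw [Fintype.sum_prod_type]
  calc ∑ a, ∑ b, x a * y b = ∑ a, x a * ∑ b, y b :=
        Finset.sum_congr rfl fun a _ => (Finset.mul_sum _ _ _).symm
    _ = 1 := by rw [hy]; simpa using hx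

end St15

/-- For a pseudoconvex sink equilibrium `H ⊊ Z` of a generic two-player
game, the time derivative `Σ_{h∈H} z_h (M z)_h` of the Lyapunov function
`z_H = Σ_{h∈H} z_h` along the replicator is strictly positive whenever `z_H` is close to,
but less than, `1`. -/
theorem statement15 [Fintype S₁] [Fintype S₂]
    (u₁ u₂ : S₁ × S₂ → ℝ) (hgen : Generic2 u₁ u₂)
    (H : Finset (S₁ × S₂)) (hH : SinkEq2 u₁ u₂ ↑H) (hne : H ≠ Finset.univ)
    (hpc : Pseudoconvex2 u₁ u₂ ↑H) :
    ∃ ε₀ ∈ Set.Ioo (0 : ℝ) 1, ∀ xy : (S₁ → ℝ) × (S₂ → ℝ), IsMixed2 xy →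
      1 - ε₀ < ∑ h ∈ H, xy.1 h.1 * xy.2 h.2 →
      (∑ h ∈ H, xy.1 h.1 * xy.2 h.2) < 1 →
      0 < ∑ h ∈ H, (xy.1 h.1 * xy.2 h.2) *
        ∑ q : S₁ × S₂, prodMat2 u₁ u₂ h q * (xy.1 q.1 * xy.2 q.2) := by

  classical
  obtain ⟨lam, hlam0, hg1, hg2, hg3⟩ := St15.exists_lam hgen hH hpc
  obtain ⟨Cb, hCb0, hCb⟩ := St15.exists_Cb u₁ u₂
  have hden : (0:ℝ) < 2 * (lam + 2 * Cb) + 1 := by nlinarith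
  refine ⟨min (1/2) (lam / (2 * (lam + 2 * Cb) + 1)),
    ⟨lt_min (by norm_num) (div_pos hlam0 hden),
      lt_of_le_of_lt (min_le_left _ _) (by norm_num)⟩, ?_⟩
  intro xy hmix hlow hupp
  obtain ⟨hx0, hy0, hx1, hy1⟩ := hmix
  set ε₀ : ℝ := min (1/2) (lam / (2 * (lam + 2 * Cb) + 1)) with hε₀
  have hε₀pos : 0 < ε₀ := lt_min (by norm_num) (div_pos hlam0 hden)
  have hε₀half : ε₀ ≤ 1/2 := min_le_left _ _
  have hε₀div : ε₀ ≤ lam / (2 * (lam + 2 * Cb) + 1) := min_le_right _ _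
  have h1 : ε₀ * (2 * (lam + 2 * Cb) + 1) ≤ lam := (le_div_iff₀ hden).mp hε₀div
  -- the total replicator sum over all profiles vanishes
  have hid := St15.sum_univ_eq_zero u₁ u₂ xy.1 xy.2 hx1 hy1
  have hcompl := Finset.sum_add_sum_compl H (fun p => (xy.1 p.1 * xy.2 p.2) *
    ∑ q : S₁ × S₂, prodMat2 u₁ u₂ p q * (xy.1 q.1 * xy.2 q.2))
  have hneg : ∀ k : S₁ × S₂,
      -((xy.1 k.1 * xy.2 k.2) * ∑ q : S₁ × S₂, prodMat2 u₁ u₂ k q *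
          (xy.1 q.1 * xy.2 q.2))
        = ∑ q : S₁ × S₂, ((xy.1 k.1 * xy.2 k.2) * (xy.1 q.1 * xy.2 q.2)) *
            St15.cfun u₁ u₂ k q := by
    intro k
    rw [Finset.mul_sum, ← Finset.sum_neg_distrib]
    refine Finset.sum_congr rfl fun q _ => ?_
    rw [St15.cfun_eq_neg]; ring
  have hstep : ∑ k ∈ Hᶜ, ∑ q : S₁ × S₂,
        ((xy.1 k.1 * xy.2 k.2) * (xy.1 q.1 * xy.2 q.2)) * St15.cfun u₁ u₂ k q
      = - ∑ k ∈ Hᶜ, (xy.1 k.1 * xy.2 k.2) *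
          ∑ q : S₁ × S₂, prodMat2 u₁ u₂ k q * (xy.1 q.1 * xy.2 q.2) := by
    rw [← Finset.sum_neg_distrib]
    exact Finset.sum_congr rfl fun k _ => (hneg k).symm
  have hT : ∑ h ∈ H, (xy.1 h.1 * xy.2 h.2) *
        ∑ q : S₁ × S₂, prodMat2 u₁ u₂ h q * (xy.1 q.1 * xy.2 q.2)
      = ∑ k ∈ Hᶜ, ∑ q : S₁ × S₂,
          ((xy.1 k.1 * xy.2 k.2) * (xy.1 q.1 * xy.2 q.2)) * St15.cfun u₁ u₂ k q := by
    linarith [hcompl, hid, hstep]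
  -- abbreviations for the two masses
  have hz1 : ∑ p : S₁ × S₂, xy.1 p.1 * xy.2 p.2 = 1 :=
    St15.zsum_one xy.1 xy.2 hx1 hy1
  have hES := Finset.sum_add_sum_compl H (fun p => xy.1 p.1 * xy.2 p.2)
  rw [hz1] at hES
  set E : ℝ := ∑ k ∈ Hᶜ, xy.1 k.1 * xy.2 k.2 with hE
  set S : ℝ := ∑ h ∈ H, xy.1 h.1 * xy.2 h.2 with hS
  have hkey := St15.key hg1 hg2 hg3 hlam0 hCb0 hCb xy.1 xy.2 hx0 hy0
  rw [← hE, ← hS] at hkey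
  rw [hT]
  refine lt_of_lt_of_le ?_ hkey
  -- numerics
  have hE1 : E = 1 - S := by linarith [hES]
  have hEpos : 0 < E := by rw [hE1]; linarith
  have hEless : E < ε₀ := by rw [hE1]; linarith
  have hShalf : 1/2 ≤ S := by linarith
  have h2 : (lam + 2 * Cb) * E ≤ (lam + 2 * Cb) * ε₀ :=
    mul_le_mul_of_nonneg_left hEless.le (by linarith)
  have h3 : (lam + 2 * Cb) * ε₀ < lam / 2 := by nlinarith
  have h4 : lam / 2 ≤ lam * S := by nlinarith
  have h5 : 0 < lam * S - (lam + 2 * Cb) * E := by linarith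
  nlinarith [mul_pos hEpos h5]
end

section
/- Let H be a sink equilibrium of a generic finite N-player game. Then H has no cavities if and only if H is a subgame, i.e. H = T₁ × ⋯ × T_N for some nonempty subsets T_i ⊆ S_i. -/
open Finset Filter

variable {N : ℕ}

/-- `H` has a cavity: some 2×2 subgame (two players `i ≠ j`, two strategies each, all
other players' strategies fixed by `p`) has exactly three of its four profiles in `H`. -/
def HasCavity {S : Fin N → Type*} (H : Set (∀ i, S i)) : Prop :=
  ∃ i j : Fin N, i ≠ j ∧ ∃ (α γ : S i) (β δ : S j) (p : ∀ k, S k),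
    α ≠ γ ∧ β ≠ δ ∧
    Function.update (Function.update p i α) j β ∈ H ∧
    Function.update (Function.update p i γ) j β ∈ H ∧
    Function.update (Function.update p i α) j δ ∈ H ∧
    Function.update (Function.update p i γ) j δ ∉ H

/-- Key lemma: a sink equilibrium with no cavities is closed under replacing one
coordinate by the corresponding coordinate of another member. -/
lemma key_update {S : Fin N → Type*}
    (u : (∀ i, S i) → Fin N → ℝ) (H : Set (∀ i, S i))
    (hH : SinkEquilibrium u H) (hnc : ¬ HasCavity H)
    {p q : ∀ i, S i} (hp : p ∈ H) (hq : q ∈ H) (i : Fin N) :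
    Function.update p i (q i) ∈ H := by
  have hpath := hH.2.1 q hq p hp
  induction hpath with
  | refl => simpa [Function.update_eq_self] using hq
  | @tail a b _ hR ih =>
    obtain ⟨ha, hb, j, ⟨hne, hcomp⟩, _⟩ := hR
    by_cases hji : j = i
    · subst hji
      have hupd : Function.update b j (q j) = Function.update a j (q j) := by
        funext k
        by_cases hk : k = j
        · subst hk; simp
        · rw [Function.update_of_ne hk, Function.update_of_ne hk, hcomp k hk]
      rw [hupd]; exact ih ha
    · have hij : i ≠ j := fun h => hji h.symm
      have hbi : a i = b i := hcomp i hij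
      by_cases hai : a i = q i
      · have : Function.update b i (q i) = b := by
          rw [← hai, hbi]
          exact Function.update_eq_self i b
        rw [this]; exact hb
      · by_contra hb'
        apply hnc
        have hbj : a j ≠ b j := by
          intro h
          apply hne
          funext k
          by_cases hk : k = j
          · subst hk; exact h
          · exact hcomp k hk
        refine ⟨i, j, hij, a i, q i, a j, b j, a, hai, hbj, ?_, ?_, ?_, ?_⟩
        · simpa [Function.update_eq_self] using ha
        · have : Function.update (Function.update a i (q i)) j (a j)
              = Function.update a i (q i) := by
            rw [show a j = (Function.update a i (q i)) j from
              (Function.update_of_ne hji _ _).symm]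
            exact Function.update_eq_self j _
          rw [this]; exact ih ha
        · have : Function.update (Function.update a i (a i)) j (b j) = b := by
            rw [Function.update_eq_self]
            funext k
            by_cases hk : k = j
            · subst hk; simp
            · rw [Function.update_of_ne hk]; exact hcomp k hk
          rw [this]; exact hb
        · have : Function.update (Function.update a i (q i)) j (b j)
              = Function.update b i (q i) := by
            funext k
            by_cases hk : k = j
            · subst hk
              rw [Function.update_self, Function.update_of_ne hji]
            · rw [Function.update_of_ne hk]
              by_cases hk2 : k = i
              · subst hk2; rw [Function.update_self, Function.update_self]
              · rw [Function.update_of_ne hk2, Function.update_of_ne hk2]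
                exact hcomp k hk
          rw [this]; exact hb'

/-- A sink equilibrium of a generic game has no cavities iff it is a
subgame, i.e. a product of nonempty strategy subsets. -/
theorem statement16
    {S : Fin N → Type*} [∀ i, Fintype (S i)] [∀ i, DecidableEq (S i)] [∀ i, Nonempty (S i)]
    (u : (∀ i, S i) → Fin N → ℝ) (hgen : Generic u)
    (H : Set (∀ i, S i)) (hH : SinkEquilibrium u H) :
    ¬ HasCavity H ↔
      ∃ T : ∀ i, Set (S i), (∀ i, (T i).Nonempty) ∧ H = {p | ∀ i, p i ∈ T i} := by
  constructor
  · intro hnc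
    refine ⟨fun i => {s | ∃ p ∈ H, p i = s}, ?_, ?_⟩
    · intro i
      obtain ⟨p, hp⟩ := hH.1
      exact ⟨p i, p, hp, rfl⟩
    · apply Set.Subset.antisymm
      · intro p hp i
        exact ⟨p, hp, rfl⟩
      · intro r hr
        have main : ∀ A : Finset (Fin N), ∃ q ∈ H, ∀ k ∈ A, q k = r k := by
          intro A
          induction A using Finset.induction with
          | empty =>
            obtain ⟨p, hp⟩ := hH.1
            exact ⟨p, hp, by simp⟩
          | @insert i A hni ih =>
            obtain ⟨q, hqH, hq⟩ := ih
            obtain ⟨w, hwH, hwi⟩ := hr i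
            refine ⟨Function.update q i (w i), key_update u H hH hnc hqH hwH i, ?_⟩
            intro k hk
            by_cases hki : k = i
            · subst hki; rw [Function.update_self]; exact hwi
            · rw [Function.update_of_ne hki]
              exact hq k ((Finset.mem_insert.mp hk).resolve_left hki)
        obtain ⟨q, hqH, hq⟩ := main Finset.univ
        have : q = r := funext fun k => hq k (Finset.mem_univ k)
        rwa [← this]
  · rintro ⟨T, hTne, rfl⟩ ⟨i, j, hij, α, γ, β, δ, p, hag, hbd, h1, h2, h3, h4⟩
    apply h4
    intro k
    by_cases hki : k = i
    · subst hki
      have := h2 k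
      rwa [Function.update_of_ne hij, Function.update_self] at this ⊢
    · by_cases hkj : k = j
      · subst hkj
        have := h3 k
        rwa [Function.update_self] at this ⊢
      · have := h1 k
        rwa [Function.update_of_ne hkj, Function.update_of_ne hki] at this ⊢
end

section
/- Let S_1,…,S_N be finite nonempty sets, Z = S_1 × ⋯ × S_N, and let H ⊆ Z be nonempty. Then content(H), viewed as a subset of the real vector space ∏_i ℝ^{S_i}, is convex if and only if H = T₁ × ⋯ × T_N for some nonempty subsets T_i ⊆ S_i. -/
open Finset Filter

variable {N : ℕ}

lemma mixed_exists_pos {S : Fin N → Type*} [∀ i, Fintype (S i)]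
    {x : ∀ i, S i → ℝ} (hx : IsMixed x) (i : Fin N) : ∃ s, 0 < x i s := by
  by_contra h
  push_neg at h
  have h0 : ∑ s, x i s = 0 :=
    Finset.sum_eq_zero fun s _ => le_antisymm (h s) (hx.1 i s)
  rw [hx.2 i] at h0; norm_num at h0

lemma zmass_pos_iff {S : Fin N → Type*} [∀ i, Fintype (S i)]
    {x : ∀ i, S i → ℝ} (hx : IsMixed x) (p : ∀ i, S i) :
    0 < zmass x p ↔ ∀ i, 0 < x i (p i) := by
  constructor
  · intro h i
    rcases (hx.1 i (p i)).lt_or_eq with h' | h'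
    · exact h'
    · exfalso
      have : zmass x p = 0 := by
        unfold zmass
        exact Finset.prod_eq_zero (Finset.mem_univ i) h'.symm
      rw [this] at h; exact lt_irrefl _ h
  · intro h
    exact Finset.prod_pos fun i _ => h i

/-- For a nonempty set `H` of pure profiles, `content(H)` is a convex
subset of `∏ i, ℝ^{S i}` iff `H` is a product of nonempty strategy subsets. -/
theorem statement17
    {S : Fin N → Type*} [∀ i, Fintype (S i)] [∀ i, Nonempty (S i)]
    (H : Set (∀ i, S i)) (hH : H.Nonempty) :
    Convex ℝ (content H) ↔
      ∃ T : ∀ i, Set (S i), (∀ i, (T i).Nonempty) ∧ H = {p | ∀ i, p i ∈ T i} := by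
  classical
  constructor
  · intro hconv
    refine ⟨fun i => {s | ∃ q ∈ H, q i = s}, ?_, ?_⟩
    · intro i
      obtain ⟨p, hp⟩ := hH
      exact ⟨p i, p, hp, rfl⟩
    · apply Set.Subset.antisymm
      · intro p hp i
        exact ⟨p, hp, rfl⟩
      · intro p hp
        simp only [Set.mem_setOf_eq] at hp
        choose q hqH hqi using hp
        rcases Nat.eq_zero_or_pos N with hN | hN
        · obtain ⟨r, hr⟩ := hH
          have : p = r := funext fun i => absurd i.2 (by omega)
          rw [this]; exact hr
        · -- Dirac delta profiles
          set δ : (∀ i, S i) → (∀ i, S i → ℝ) :=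
            fun r i s => if r i = s then 1 else 0 with hδ
          have hδmixed : ∀ r, IsMixed (δ r) := by
            intro r
            constructor
            · intro i s
              simp only [hδ]
              split <;> norm_num
            · intro i
              simp [hδ]
          have hδmem : ∀ r ∈ H, δ r ∈ content H := by
            intro r hr
            refine ⟨hδmixed r, ?_⟩
            intro p' hp'
            have hall := (zmass_pos_iff (hδmixed r) p').1 hp'
            have : r = p' := by
              funext i
              have := hall i
              simp only [hδ] at this
              by_contra hne
              rw [if_neg hne] at this
              exact lt_irrefl _ this
            rw [← this]; exact hr
          -- convex combination
          set x : ∀ i, S i → ℝ := ∑ j : Fin N, ((N : ℝ)⁻¹) • δ (q j) with hxdef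
          have hNpos : (0 : ℝ) < (N : ℝ) := by exact_mod_cast hN
          have hxmem : x ∈ content H := by
            apply hconv.sum_mem (fun j _ => by positivity)
            · rw [Finset.sum_const, Finset.card_univ, Fintype.card_fin, nsmul_eq_mul]
              field_simp
            · intro j _
              exact hδmem (q j) (hqH j)
          have hxval : ∀ i s, x i s = ∑ j : Fin N, (N : ℝ)⁻¹ * δ (q j) i s := by
            intro i s
            rw [hxdef]
            simp [Finset.sum_apply]
          have hxpos : ∀ i, 0 < x i (p i) := by
            intro i
            rw [hxval]
            have hterm : (N : ℝ)⁻¹ * δ (q i) i (p i) = (N : ℝ)⁻¹ := by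
              simp [hδ, hqi i]
            calc (0 : ℝ) < (N : ℝ)⁻¹ := by positivity
              _ = (N : ℝ)⁻¹ * δ (q i) i (p i) := hterm.symm
              _ ≤ ∑ j : Fin N, (N : ℝ)⁻¹ * δ (q j) i (p i) := by
                  apply Finset.single_le_sum (f := fun j => (N : ℝ)⁻¹ * δ (q j) i (p i))
                    (fun j _ => ?_) (Finset.mem_univ i)
                  have := (hδmixed (q j)).1 i (p i)
                  positivity
          exact hxmem.2 p ((zmass_pos_iff hxmem.1 p).2 hxpos)
  · rintro ⟨T, hTne, rfl⟩
    -- membership characterization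
    have key : ∀ x : ∀ i, S i → ℝ, IsMixed x →
        (x ∈ content {p | ∀ i, p i ∈ T i} ↔ ∀ i s, 0 < x i s → s ∈ T i) := by
      intro x hx
      constructor
      · intro hmem i s hpos
        choose σ hσ using mixed_exists_pos hx
        set p : ∀ i, S i := fun j => if h : j = i then h ▸ s else σ j with hpdef
        have hpi : p i = s := by simp [hpdef]
        have hppos : ∀ j, 0 < x j (p j) := by
          intro j
          by_cases h : j = i
          · subst h; rw [hpi]; exact hpos
          · simp only [hpdef, dif_neg h]; exact hσ j
        have := hmem.2 p ((zmass_pos_iff hx p).2 hppos)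
        have := this i
        rwa [hpi] at this
      · intro h
        refine ⟨hx, fun p hp i => ?_⟩
        exact h i (p i) ((zmass_pos_iff hx p).1 hp i)
    intro x hx y hy a b ha hb hab
    have hxm := hx.1
    have hym := hy.1
    have hmixed : IsMixed (a • x + b • y) := by
      constructor
      · intro i s
        have := hxm.1 i s
        have := hym.1 i s
        simp only [Pi.add_apply, Pi.smul_apply, smul_eq_mul]
        positivity
      · intro i
        simp only [Pi.add_apply, Pi.smul_apply, smul_eq_mul]
        rw [Finset.sum_add_distrib, ← Finset.mul_sum, ← Finset.mul_sum,
          hxm.2 i, hym.2 i, mul_one, mul_one, hab]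
    rw [key _ hmixed]
    intro i s hpos
    simp only [Pi.add_apply, Pi.smul_apply, smul_eq_mul] at hpos
    rcases lt_or_ge 0 (a * x i s) with h | h
    · have hax : 0 < x i s := by
        rcases ha.lt_or_eq with ha' | ha'
        · have := hxm.1 i s
          nlinarith
        · rw [← ha'] at h; simp at h
      exact (key x hxm).1 hx i s hax
    · have hb' : 0 < b * y i s := by
        nlinarith
      have hby : 0 < y i s := by
        rcases hb.lt_or_eq with hb'' | hb''
        · nlinarith [hym.1 i s]
        · rw [← hb''] at hb'; simp at hb'
      exact (key y hym).1 hy i s hby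
end

section
/- Let u be a generic finite two-player game whose preference graph contains a source p (for every profile q comparable to p, the arc between them is directed from p to q) and a sink q* (for every profile r comparable to q*, the arc between them is directed from r to q*). Then there is a directed path from p to q* in the preference graph. -/
open Finset Filter

variable {S₁ S₂ : Type*}

/-- Two profiles are comparable if they are `i`-comparable for some player `i`. -/
def Comparable2 (p q : S₁ × S₂) : Prop := Comp1 p q ∨ Comp2 p q

/-- In a generic two-player game, there is a directed path in the
preference graph from any source `p` to any sink `q`. -/
theorem statement18 (u₁ u₂ : S₁ × S₂ → ℝ) (hgen : Generic2 u₁ u₂)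
    (p q : S₁ × S₂)
    (hsource : ∀ r, Comparable2 p r → PrefArc2 u₁ u₂ p r)
    (hsink : ∀ r, Comparable2 r q → PrefArc2 u₁ u₂ r q) :
    Relation.ReflTransGen (PrefArc2 u₁ u₂) p q := by
  by_cases h1 : p.1 = q.1
  · by_cases h2 : p.2 = q.2
    · have : p = q := Prod.ext h1 h2
      exact this ▸ Relation.ReflTransGen.refl
    · exact Relation.ReflTransGen.single (hsink p (Or.inr ⟨h1, h2⟩))
  · by_cases h2 : p.2 = q.2
    · exact Relation.ReflTransGen.single (hsink p (Or.inl ⟨h2, h1⟩))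
    · refine Relation.ReflTransGen.head (b := (q.1, p.2)) ?_ (Relation.ReflTransGen.single ?_)
      · exact hsource (q.1, p.2) (Or.inl ⟨rfl, h1⟩)
      · exact hsink (q.1, p.2) (Or.inr ⟨rfl, h2⟩)
end
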